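/- arXiv:2011.11371 — 5 statements merged into one kernel-verified Lean document; each statement's English description precedes it below -/
import Mathlib

section
/- Under the same hypotheses as the factorial derivative bound for the autonomous ODE y' = f(y) (f is β-times differentiable, all derivatives of order ≤ β bounded by 1 in absolute value, f^(β) is 1-Lipschitz), the (β+1)-th derivative of the solution y satisfies the Lipschitz bound |y^(β+1)(x) - y^(β+1)(x')| ≤ (β+1)! · |x - x'| for all x, x' ∈ [x₀ - α, x₀ + α] with α = min(a,b). -/
/-!
Differentiating `y' = f ∘ y` repeatedly gives `y^(k+1) = G_k ∘ y` with `G_0 = f` and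
`G_(k+1) = G_k' * f`. Call `g` `(C, r)`-bounded if `|g^(j)| ≤ C r^j` and `g^(j)` is
`C r^(j+1)`-Lipschitz; by Leibniz' rule a product of a `(C, r)`- and a `(D, t)`-bounded function is
`(C D, r + t)`-bounded, and `g'` is `(C r, r)`-bounded. Since `f` is `(1, 1)`-bounded, induction
makes `G_k` `(k!, k + 1)`-bounded, so `G_β` is `(β + 1)!`-Lipschitz; and `y` is 1-Lipschitz since
`|f| ≤ 1`.
-/

open Set Finset
open scoped Nat

theorem abs_mul_sub_mul_le (a b a' b' : ℝ) :
    |a * b - a' * b'| ≤ |a - a'| * |b| + |a'| * |b - b'| := by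
  calc |a * b - a' * b'| = |(a - a') * b + a' * (b - b')| := by congr 1; ring
    _ ≤ |a - a'| * |b| + |a'| * |b - b'| := by
      rw [← abs_mul, ← abs_mul]; exact abs_add_le _ _

/-- `(C, r)`-boundedness: the derivative bounds of `z ↦ C * exp (r * z)`. -/
structure HasGeometricDerivBoundsOn (g : ℝ → ℝ) (s : Set ℝ) (m : ℕ) (C r : ℝ) : Prop where
  contDiffOn : ContDiffOn ℝ m g s
  abs_iteratedDerivWithin_le : ∀ j ≤ m, ∀ z ∈ s, |iteratedDerivWithin j g s z| ≤ C * r ^ j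
  abs_iteratedDerivWithin_sub_le : ∀ j ≤ m, ∀ z ∈ s, ∀ z' ∈ s,
    |iteratedDerivWithin j g s z - iteratedDerivWithin j g s z'| ≤ C * r ^ (j + 1) * |z - z'|

namespace HasGeometricDerivBoundsOn

variable {g u v : ℝ → ℝ} {s : Set ℝ} {m n : ℕ} {C D r t : ℝ}

theorem of_le (h : HasGeometricDerivBoundsOn g s m C r) (hnm : n ≤ m) :
    HasGeometricDerivBoundsOn g s n C r where
  contDiffOn := h.contDiffOn.of_le (by exact_mod_cast hnm)
  abs_iteratedDerivWithin_le j hj := h.abs_iteratedDerivWithin_le j (hj.trans hnm)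
  abs_iteratedDerivWithin_sub_le j hj := h.abs_iteratedDerivWithin_sub_le j (hj.trans hnm)

theorem of_abs_iteratedDerivWithin_sub_le (hs : UniqueDiffOn ℝ s) (hconv : Convex ℝ s)
    (hg : ContDiffOn ℝ m g s)
    (hbound : ∀ j ≤ m, ∀ z ∈ s, |iteratedDerivWithin j g s z| ≤ C * r ^ j)
    (htop : ∀ z ∈ s, ∀ z' ∈ s,
      |iteratedDerivWithin m g s z - iteratedDerivWithin m g s z'| ≤ C * r ^ (m + 1) * |z - z'|) :
    HasGeometricDerivBoundsOn g s m C r := by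
  refine ⟨hg, hbound, fun j hj z hz z' hz' => ?_⟩
  rcases hj.eq_or_lt with rfl | hjm
  · exact htop z hz z' hz'
  have hdiff : DifferentiableOn ℝ (iteratedDerivWithin j g s) s :=
    hg.differentiableOn_iteratedDerivWithin (by exact_mod_cast hjm) hs
  have hderiv : ∀ w ∈ s, ‖derivWithin (iteratedDerivWithin j g s) s w‖ ≤ C * r ^ (j + 1) := by
    intro w hw
    rw [Real.norm_eq_abs, ← iteratedDerivWithin_succ]
    exact hbound (j + 1) hjm w hw
  simpa only [Real.norm_eq_abs] using
    hconv.norm_image_sub_le_of_norm_derivWithin_le hdiff hderiv hz' hz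

theorem mul (hs : UniqueDiffOn ℝ s) (hu : HasGeometricDerivBoundsOn u s m C r)
    (hv : HasGeometricDerivBoundsOn v s m D t) :
    HasGeometricDerivBoundsOn (u * v) s m (C * D) (r + t) := by
  have leibniz : ∀ j ≤ m, ∀ z ∈ s, iteratedDerivWithin j (u * v) s z =
      ∑ i ∈ range (j + 1), j.choose i * iteratedDerivWithin i u s z *
        iteratedDerivWithin (j - i) v s z := fun j hj z hz =>
    iteratedDerivWithin_mul hz hs ((hu.of_le hj).contDiffOn z hz) ((hv.of_le hj).contDiffOn z hz)
  have binomial : ∀ j, C * D * (r + t) ^ j =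
      ∑ i ∈ range (j + 1), j.choose i * ((C * r ^ i) * (D * t ^ (j - i))) := by
    intro j
    rw [add_pow, mul_sum]
    exact sum_congr rfl fun i _ => by ring
  refine ⟨hu.contDiffOn.mul hv.contDiffOn, fun j hj z hz => ?_, fun j hj z hz z' hz' => ?_⟩
  · rw [leibniz j hj z hz, binomial]
    refine (abs_sum_le_sum_abs _ _).trans (sum_le_sum fun i hi => ?_)
    have hi : i ≤ j := Nat.lt_succ_iff.mp (mem_range.mp hi)
    have hU := hu.abs_iteratedDerivWithin_le i (hi.trans hj) z hz
    have hV := hv.abs_iteratedDerivWithin_le (j - i) ((j.sub_le i).trans hj) z hz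
    rw [mul_assoc, abs_mul, abs_mul, Nat.abs_cast]
    exact mul_le_mul_of_nonneg_left (mul_le_mul hU hV (abs_nonneg _) ((abs_nonneg _).trans hU))
      (Nat.cast_nonneg _)
  · rw [leibniz j hj z hz, leibniz j hj z' hz', ← sum_sub_distrib, pow_succ, ← mul_assoc,
      binomial, sum_mul, sum_mul]
    refine (abs_sum_le_sum_abs _ _).trans (sum_le_sum fun i hi => ?_)
    have hi : i ≤ j := Nat.lt_succ_iff.mp (mem_range.mp hi)
    have hV := hv.abs_iteratedDerivWithin_le (j - i) ((j.sub_le i).trans hj) z hz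
    have hU' := hu.abs_iteratedDerivWithin_le i (hi.trans hj) z' hz'
    have hΔU := hu.abs_iteratedDerivWithin_sub_le i (hi.trans hj) z hz z' hz'
    have hΔV := hv.abs_iteratedDerivWithin_sub_le (j - i) ((j.sub_le i).trans hj) z hz z' hz'
    rw [mul_assoc, mul_assoc, ← mul_sub, abs_mul, Nat.abs_cast, mul_assoc, mul_assoc]
    gcongr
    calc _ ≤ _ := abs_mul_sub_mul_le _ _ _ _
      _ ≤ C * r ^ (i + 1) * |z - z'| * (D * t ^ (j - i)) +
          C * r ^ i * (D * t ^ (j - i + 1) * |z - z'|) :=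
        add_le_add (mul_le_mul hΔU hV (abs_nonneg _) ((abs_nonneg _).trans hΔU))
          (mul_le_mul hU' hΔV (abs_nonneg _) ((abs_nonneg _).trans hU'))
      _ = _ := by ring

theorem derivWithin (hs : UniqueDiffOn ℝ s) (h : HasGeometricDerivBoundsOn g s (m + 1) C r) :
    HasGeometricDerivBoundsOn (derivWithin g s) s m (C * r) r where
  contDiffOn := h.contDiffOn.derivWithin hs (by norm_cast)
  abs_iteratedDerivWithin_le j hj z hz := by
    rw [← iteratedDerivWithin_succ']
    simpa only [pow_succ', mul_assoc] using h.abs_iteratedDerivWithin_le (j + 1) (by omega) z hz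
  abs_iteratedDerivWithin_sub_le j hj z hz z' hz' := by
    rw [← iteratedDerivWithin_succ']
    simpa only [pow_succ', mul_assoc] using
      h.abs_iteratedDerivWithin_sub_le (j + 1) (by omega) z hz z' hz'

end HasGeometricDerivBoundsOn

/-- The `G_k` above: `L_f^k f`, where `L_f g = g' * f` is the derivative along the vector
field `f`. -/
noncomputable def iteratedLieDeriv (f : ℝ → ℝ) (s : Set ℝ) : ℕ → ℝ → ℝ
  | 0 => f
  | k + 1 => derivWithin (iteratedLieDeriv f s k) s * f

theorem hasGeometricDerivBoundsOn_iteratedLieDeriv {f : ℝ → ℝ} {s : Set ℝ} {m : ℕ}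
    (hs : UniqueDiffOn ℝ s) (hf : HasGeometricDerivBoundsOn f s m 1 1) :
    ∀ k ≤ m, HasGeometricDerivBoundsOn (iteratedLieDeriv f s k) s (m - k) k ! (k + 1) := by
  intro k
  induction k with
  | zero => intro _; simpa [iteratedLieDeriv] using hf
  | succ k ih =>
    intro hk
    have hG := (ih (by omega)).of_le (show m - (k + 1) + 1 ≤ m - k by omega)
    have hfactorial : ((k + 1)! : ℝ) = k ! * (k + 1) * 1 := by
      push_cast [Nat.factorial_succ]; ring
    rw [iteratedLieDeriv, hfactorial, Nat.cast_succ]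
    exact (hG.derivWithin hs).mul hs (hf.of_le (m.sub_le (k + 1)))

theorem iteratedDerivWithin_succ_eq_iteratedLieDeriv_comp {f y : ℝ → ℝ} {s t : Set ℝ}
    (ht : UniqueDiffOn ℝ t) (hode : ∀ x ∈ t, HasDerivWithinAt y (f (y x)) t x)
    (hmaps : MapsTo y t s) :
    ∀ k, (∀ i < k, DifferentiableOn ℝ (iteratedLieDeriv f s i) s) →
      ∀ x ∈ t, iteratedDerivWithin (k + 1) y t x = iteratedLieDeriv f s k (y x) := by
  intro k
  induction k with
  | zero =>
    intro _ x hx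
    simpa [iteratedLieDeriv] using (hode x hx).derivWithin (ht x hx)
  | succ k ih =>
    intro hdiff x hx
    have heq : EqOn (iteratedDerivWithin (k + 1) y t) (iteratedLieDeriv f s k ∘ y) t :=
      ih (fun i hi => hdiff i (by omega))
    have hchain := ((hdiff k k.lt_succ_self) (y x) (hmaps hx)).hasDerivWithinAt.comp x
      (hode x hx) hmaps
    rw [iteratedDerivWithin_succ, derivWithin_congr heq (heq hx), hchain.derivWithin (ht x hx)]
    rfl

theorem autonomous_top_derivative_lipschitz_general
    (β : ℕ) (f y : ℝ → ℝ) (x₀ y₀ a b : ℝ) (ha : 0 < a) (hb : 0 < b)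
    (hf : ContDiffOn ℝ (β : ℕ∞) f (Icc (y₀ - b) (y₀ + b)))
    (hbd : ∀ k ≤ β, ∀ z ∈ Icc (y₀ - b) (y₀ + b),
      |iteratedDerivWithin k f (Icc (y₀ - b) (y₀ + b)) z| ≤ 1)
    (hlip : ∀ z ∈ Icc (y₀ - b) (y₀ + b), ∀ z' ∈ Icc (y₀ - b) (y₀ + b),
      |iteratedDerivWithin β f (Icc (y₀ - b) (y₀ + b)) z -
        iteratedDerivWithin β f (Icc (y₀ - b) (y₀ + b)) z'| ≤ |z - z'|)
    (hode : ∀ x ∈ Icc (x₀ - a) (x₀ + a), HasDerivAt y (f (y x)) x)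
    (htraj : ∀ x ∈ Icc (x₀ - a) (x₀ + a), y x ∈ Icc (y₀ - b) (y₀ + b)) :
    ∀ x ∈ Icc (x₀ - min a b) (x₀ + min a b), ∀ x' ∈ Icc (x₀ - min a b) (x₀ + min a b),
      |iteratedDerivWithin (β + 1) y (Icc (x₀ - a) (x₀ + a)) x -
        iteratedDerivWithin (β + 1) y (Icc (x₀ - a) (x₀ + a)) x'| ≤
      (β + 1).factorial * |x - x'| := by
  set I := Icc (y₀ - b) (y₀ + b)
  set J := Icc (x₀ - a) (x₀ + a)
  have hI : UniqueDiffOn ℝ I := uniqueDiffOn_Icc (by linarith)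
  have hfG : HasGeometricDerivBoundsOn f I β 1 1 :=
    .of_abs_iteratedDerivWithin_sub_le hI (convex_Icc _ _) hf (by simpa using hbd)
      (by simpa using hlip)
  have hG := hasGeometricDerivBoundsOn_iteratedLieDeriv hI hfG
  have hy := iteratedDerivWithin_succ_eq_iteratedLieDeriv_comp (uniqueDiffOn_Icc (by linarith))
    (fun x hx => (hode x hx).hasDerivWithinAt) htraj β fun i hi =>
      (hG i hi.le).contDiffOn.differentiableOn (by norm_cast; omega)
  have hy_lip : ∀ x ∈ J, ∀ x' ∈ J, |y x - y x'| ≤ |x - x'| := fun x hx x' hx' => by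
    simpa only [Real.norm_eq_abs, one_mul] using
      (convex_Icc _ _).norm_image_sub_le_of_norm_hasDerivWithin_le (C := 1)
        (fun z hz => (hode z hz).hasDerivWithinAt)
        (fun z hz => by simpa using hbd 0 β.zero_le _ (htraj z hz)) hx' hx
  intro x hx x' hx'
  have hJ : Icc (x₀ - min a b) (x₀ + min a b) ⊆ J :=
    Icc_subset_Icc (by linarith [min_le_left a b]) (by linarith [min_le_left a b])
  rw [hy x (hJ hx), hy x' (hJ hx')]
  calc _ ≤ β ! * (β + 1) ^ (0 + 1) * |y x - y x'| := by
        simpa using (hG β le_rfl).abs_iteratedDerivWithin_sub_le 0 (by omega) _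
          (htraj x (hJ hx)) _ (htraj x' (hJ hx'))
    _ = (β + 1)! * |y x - y x'| := by push_cast [Nat.factorial_succ]; ring
    _ ≤ (β + 1)! * |x - x'| :=
        mul_le_mul_of_nonneg_left (hy_lip x (hJ hx) x' (hJ hx')) (by positivity)

theorem autonomous_top_derivative_lipschitz
    (β : ℕ) (f y : ℝ → ℝ) (x₀ y₀ a b : ℝ) (ha : 0 < a) (hb : 0 < b)
    (hf : ContDiffOn ℝ (β : ℕ∞) f (Icc (y₀ - b) (y₀ + b)))
    (hbd : ∀ k ≤ β, ∀ z ∈ Icc (y₀ - b) (y₀ + b),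
      |iteratedDerivWithin k f (Icc (y₀ - b) (y₀ + b)) z| ≤ 1)
    (hlip : ∀ z ∈ Icc (y₀ - b) (y₀ + b), ∀ z' ∈ Icc (y₀ - b) (y₀ + b),
      |iteratedDerivWithin β f (Icc (y₀ - b) (y₀ + b)) z -
        iteratedDerivWithin β f (Icc (y₀ - b) (y₀ + b)) z'| ≤ |z - z'|)
    (hy0 : y x₀ = y₀)
    (hode : ∀ x ∈ Icc (x₀ - a) (x₀ + a), HasDerivAt y (f (y x)) x)
    (htraj : ∀ x ∈ Icc (x₀ - a) (x₀ + a), y x ∈ Icc (y₀ - b) (y₀ + b)) :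
    ∀ x ∈ Icc (x₀ - min a b) (x₀ + min a b), ∀ x' ∈ Icc (x₀ - min a b) (x₀ + min a b),
      |iteratedDerivWithin (β + 1) y (Icc (x₀ - a) (x₀ + a)) x -
        iteratedDerivWithin (β + 1) y (Icc (x₀ - a) (x₀ + a)) x'| ≤
      (β + 1).factorial * |x - x'| :=
  autonomous_top_derivative_lipschitz_general β f y x₀ y₀ a b ha hb hf hbd hlip hode htraj
end

section
/- Let f : ℝ² → ℝ be continuous on Υ = [x₀-a, x₀+a] × [y₀-b, y₀+b], with all partial derivatives D^p f of total order [p] ≤ β existing and satisfying |D^p f(x,y)| ≤ 1 on Υ, and for all p with [p] = β, |D^p f(x,y) - D^p f(x',ỹ)| ≤ max(|x-x'|, |y-ỹ|). If y solves y'(x) = f(x, y(x)) with y(x₀) = y₀ and the trajectory remains in Υ, then for all x ∈ [x₀-α, x₀+α] with α = min(a,b) and all 1 ≤ k ≤ β+1, we have |y^(k)(x)| ≤ 2^{k-1}(k-1)!. -/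
/-
Differentiating `y' = f (x, y)` repeatedly, `y^(k+1) (x)` is a sum of products of mixed partials
`∂ₓ^p ∂_y^q f` of order at most `k`, evaluated at `(x, y x)`; Schwarz's theorem keeps every
factor in this normal form, where the hypothesis bounds it by `1`. Each differentiation turns a
product of at most `k + 1` factors into `2 (k + 1)` products of at most `k + 2` factors, so
there are at most `2^k k!` products.
-/

open Set

/-- The mixed partial derivative `∂^{p₁}_x ∂^{p₂}_y f` of a bivariate function. -/
noncomputable def Dp (f : ℝ → ℝ → ℝ) (p₁ p₂ : ℕ) (x z : ℝ) : ℝ :=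
  iteratedDeriv p₁ (fun u => iteratedDeriv p₂ (f u) z) x

namespace NonautonomousODE

noncomputable def partialDeriv (v : ℝ × ℝ) (G : ℝ × ℝ → ℝ) : ℝ × ℝ → ℝ :=
  fun p => fderiv ℝ G p v

theorem contDiff_partialDeriv {G : ℝ × ℝ → ℝ} {n : ℕ} (hG : ContDiff ℝ (n + 1 : ℕ) G)
    (v : ℝ × ℝ) : ContDiff ℝ n (partialDeriv v G) :=
  (hG.fderiv_right (by norm_cast)).clm_apply contDiff_const

theorem contDiff_iterate_partialDeriv {G : ℝ × ℝ → ℝ} {m j : ℕ} (hG : ContDiff ℝ (m + j : ℕ) G)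
    (v : ℝ × ℝ) : ContDiff ℝ m ((partialDeriv v)^[j] G) := by
  induction j generalizing m with
  | zero => simpa using hG
  | succ j ih =>
    rw [Function.iterate_succ_apply']
    exact contDiff_partialDeriv (ih (m := m + 1) (by rwa [Nat.add_right_comm, Nat.add_assoc])) v

theorem partialDeriv_comm {G : ℝ × ℝ → ℝ} (hG : ContDiff ℝ 2 G) (v w : ℝ × ℝ) :
    partialDeriv w (partialDeriv v G) = partialDeriv v (partialDeriv w G) := by
  funext p
  have hd : HasFDerivAt (fderiv ℝ G) (fderiv ℝ (fderiv ℝ G) p) p :=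
    ((hG.fderiv_right (m := 1) (by norm_num)).differentiable one_ne_zero p).hasFDerivAt
  have hsymm : IsSymmSndFDerivAt ℝ G p :=
    hG.contDiffAt.isSymmSndFDerivAt (by simp [minSmoothness_of_isRCLikeNormedField])
  have happly (u : ℝ × ℝ) : HasFDerivAt (partialDeriv u G)
      ((ContinuousLinearMap.apply ℝ ℝ u).comp (fderiv ℝ (fderiv ℝ G) p)) p :=
    (ContinuousLinearMap.apply ℝ ℝ u).hasFDerivAt.comp p hd
  simp only [partialDeriv, (happly v).fderiv, (happly w).fderiv]
  exact hsymm w v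

theorem partialDeriv_iterate_comm {G : ℝ × ℝ → ℝ} {j : ℕ} (hG : ContDiff ℝ (j + 1 : ℕ) G)
    (v w : ℝ × ℝ) :
    partialDeriv w ((partialDeriv v)^[j] G) = (partialDeriv v)^[j] (partialDeriv w G) := by
  induction j generalizing G with
  | zero => rfl
  | succ j ih =>
    have hG2 : ContDiff ℝ 2 G := hG.of_le (by norm_cast; omega)
    rw [Function.iterate_succ_apply, Function.iterate_succ_apply,
      ih (contDiff_partialDeriv hG v), partialDeriv_comm hG2]

noncomputable def mixedPartial (G : ℝ × ℝ → ℝ) (q : ℕ × ℕ) : ℝ × ℝ → ℝ :=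
  (partialDeriv (1, 0))^[q.1] ((partialDeriv (0, 1))^[q.2] G)

theorem mixedPartial_zero (G : ℝ × ℝ → ℝ) : mixedPartial G (0, 0) = G := rfl

theorem contDiff_mixedPartial {G : ℝ × ℝ → ℝ} {m : ℕ} {q : ℕ × ℕ}
    (hG : ContDiff ℝ (m + q.1 + q.2 : ℕ) G) : ContDiff ℝ m (mixedPartial G q) :=
  contDiff_iterate_partialDeriv (contDiff_iterate_partialDeriv hG _) _

theorem partialDeriv_fst_mixedPartial (G : ℝ × ℝ → ℝ) (q : ℕ × ℕ) :
    partialDeriv (1, 0) (mixedPartial G q) = mixedPartial G (q.1 + 1, q.2) :=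
  (Function.iterate_succ_apply' _ _ _).symm

theorem partialDeriv_snd_mixedPartial {G : ℝ × ℝ → ℝ} {n : ℕ} (hG : ContDiff ℝ n G)
    {q : ℕ × ℕ} (hq : q.1 + q.2 + 1 ≤ n) :
    partialDeriv (0, 1) (mixedPartial G q) = mixedPartial G (q.1, q.2 + 1) := by
  have h : ContDiff ℝ (q.1 + 1 : ℕ) ((partialDeriv (0, 1))^[q.2] G) :=
    contDiff_iterate_partialDeriv (hG.of_le (by norm_cast; omega)) _
  rw [mixedPartial, partialDeriv_iterate_comm h,
    ← Function.iterate_succ_apply' (partialDeriv (0, 1))]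
  rfl

theorem iteratedDeriv_comp_add_smul {G : ℝ × ℝ → ℝ} {k : ℕ} (hG : ContDiff ℝ k G)
    (p v : ℝ × ℝ) :
    iteratedDeriv k (fun t : ℝ => G (p + t • v)) =
      fun t => (partialDeriv v)^[k] G (p + t • v) := by
  induction k generalizing G with
  | zero => rfl
  | succ k ih =>
    have hderiv :
        deriv (fun t : ℝ => G (p + t • v)) = fun t => partialDeriv v G (p + t • v) := by
      funext t
      have hline : HasDerivAt (fun t : ℝ => p + t • v) v t := by
        simpa using ((hasDerivAt_id t).smul_const v).const_add p
      exact ((hG.differentiable (by simp) _).hasFDerivAt.comp_hasDerivAt t hline).deriv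
    rw [iteratedDeriv_succ', hderiv, ih (contDiff_partialDeriv hG v), Function.iterate_succ_apply]

theorem Dp_eq_mixedPartial {f : ℝ → ℝ → ℝ} {n : ℕ} (hf : ContDiff ℝ n (Function.uncurry f))
    {p₁ p₂ : ℕ} (hp : p₁ + p₂ ≤ n) (x z : ℝ) :
    Dp f p₁ p₂ x z = mixedPartial (Function.uncurry f) (p₁, p₂) (x, z) := by
  have hslice (u : ℝ) : f u = fun t : ℝ => Function.uncurry f ((u, 0) + t • (0, 1)) := by
    funext t; simp
  have hinner (u : ℝ) : iteratedDeriv p₂ (f u) z =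
      (fun t : ℝ => (partialDeriv (0, 1))^[p₂] (Function.uncurry f) ((0, z) + t • (1, 0))) u := by
    rw [hslice, iteratedDeriv_comp_add_smul (hf.of_le (by norm_cast; omega))]
    simp
  simp only [Dp, hinner]
  rw [iteratedDeriv_comp_add_smul
    (contDiff_iterate_partialDeriv (hf.of_le (by exact_mod_cast hp)) _)]
  simp [mixedPartial]

abbrev Monomial := List (ℕ × ℕ)

noncomputable def evalMonomial (G : ℝ × ℝ → ℝ) (m : Monomial) (p : ℝ × ℝ) : ℝ :=
  (m.map fun q => mixedPartial G q p).prod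

noncomputable def evalSum (G : ℝ × ℝ → ℝ) (E : List Monomial) (p : ℝ × ℝ) : ℝ :=
  (E.map fun m => evalMonomial G m p).sum

theorem evalMonomial_cons (G : ℝ × ℝ → ℝ) (q : ℕ × ℕ) (m : Monomial) (p : ℝ × ℝ) :
    evalMonomial G (q :: m) p = mixedPartial G q p * evalMonomial G m p := rfl

theorem evalSum_cons (G : ℝ × ℝ → ℝ) (m : Monomial) (E : List Monomial) (p : ℝ × ℝ) :
    evalSum G (m :: E) p = evalMonomial G m p + evalSum G E p := rfl

theorem evalSum_map_cons (G : ℝ × ℝ → ℝ) (q : ℕ × ℕ) (E : List Monomial) (p : ℝ × ℝ) :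
    evalSum G (E.map (q :: ·)) p = mixedPartial G q p * evalSum G E p := by
  simp [evalSum, evalMonomial, Function.comp_def, List.sum_map_mul_left]

/-- Formal `d/dx` of a monomial along a solution of `y' = G (x, y)`: by the chain and Leibniz
rules, each factor `∂^q G` in turn becomes `∂^(q + (1,0)) G + G · ∂^(q + (0,1)) G`. -/
def derivMonomial : Monomial → List Monomial
  | [] => []
  | q :: t => ((q.1 + 1, q.2) :: t) :: ((0, 0) :: (q.1, q.2 + 1) :: t) ::
      (derivMonomial t).map (q :: ·)

def solutionDerivExpr : ℕ → List Monomial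
  | 0 => [[(0, 0)]]
  | k + 1 => (solutionDerivExpr k).flatMap derivMonomial

theorem length_derivMonomial (m : Monomial) : (derivMonomial m).length = 2 * m.length := by
  induction m with
  | nil => rfl
  | cons q t ih => simp only [derivMonomial, List.length_cons, List.length_map, ih]; ring

theorem length_le_of_mem_derivMonomial {m m' : Monomial} (h : m' ∈ derivMonomial m) :
    m'.length ≤ m.length + 1 := by
  induction m generalizing m' with
  | nil => simp [derivMonomial] at h
  | cons q t ih =>
    simp only [derivMonomial, List.mem_cons, List.mem_map] at h
    rcases h with rfl | rfl | ⟨m'', hm'', rfl⟩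
    · simp
    · simp
    · simpa using ih hm''

theorem order_le_of_mem_derivMonomial {k : ℕ} {m m' : Monomial}
    (hm : ∀ q ∈ m, q.1 + q.2 ≤ k) (h : m' ∈ derivMonomial m) : ∀ q ∈ m', q.1 + q.2 ≤ k + 1 := by
  induction m generalizing m' with
  | nil => simp [derivMonomial] at h
  | cons q t ih =>
    simp only [List.mem_cons, forall_eq_or_imp] at hm
    simp only [derivMonomial, List.mem_cons, List.mem_map] at h
    rcases h with rfl | rfl | ⟨m'', hm'', rfl⟩ <;>
      simp only [List.mem_cons, forall_eq_or_imp]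
    · exact ⟨by omega, fun q' hq' => (hm.2 q' hq').trans k.le_succ⟩
    · exact ⟨by omega, by omega, fun q' hq' => (hm.2 q' hq').trans k.le_succ⟩
    · exact ⟨by omega, ih hm.2 hm''⟩

theorem length_le_of_mem_solutionDerivExpr {k : ℕ} {m : Monomial}
    (h : m ∈ solutionDerivExpr k) : m.length ≤ k + 1 := by
  induction k generalizing m with
  | zero => simp_all [solutionDerivExpr]
  | succ k ih =>
    obtain ⟨m₀, hm₀, hm⟩ := List.mem_flatMap.1 h
    exact (length_le_of_mem_derivMonomial hm).trans (by simpa using ih hm₀)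

theorem order_le_of_mem_solutionDerivExpr {k : ℕ} {m : Monomial}
    (h : m ∈ solutionDerivExpr k) : ∀ q ∈ m, q.1 + q.2 ≤ k := by
  induction k generalizing m with
  | zero => simp_all [solutionDerivExpr]
  | succ k ih =>
    obtain ⟨m₀, hm₀, hm⟩ := List.mem_flatMap.1 h
    exact order_le_of_mem_derivMonomial (ih hm₀) hm

theorem length_solutionDerivExpr_le (k : ℕ) :
    (solutionDerivExpr k).length ≤ 2 ^ k * k.factorial := by
  induction k with
  | zero => rfl
  | succ k ih =>
    have hterm : ∀ n ∈ (solutionDerivExpr k).map fun m => (derivMonomial m).length,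
        n ≤ 2 * (k + 1) := by
      simp only [List.mem_map, forall_exists_index, and_imp, forall_apply_eq_imp_iff₂]
      intro m hm
      rw [length_derivMonomial]
      exact Nat.mul_le_mul_left 2 (length_le_of_mem_solutionDerivExpr hm)
    calc (solutionDerivExpr (k + 1)).length
        ≤ (solutionDerivExpr k).length * (2 * (k + 1)) := by
          rw [solutionDerivExpr, List.length_flatMap]
          simpa using List.sum_le_card_nsmul _ _ hterm
      _ ≤ 2 ^ k * k.factorial * (2 * (k + 1)) := Nat.mul_le_mul_right _ ih
      _ = 2 ^ (k + 1) * (k + 1).factorial := by rw [pow_succ, Nat.factorial_succ]; ring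

section Solution

variable {F : ℝ × ℝ → ℝ} {n : ℕ} {y : ℝ → ℝ} {x : ℝ}

theorem hasDerivAt_mixedPartial_comp (hF : ContDiff ℝ n F) (hy : HasDerivAt y (F (x, y x)) x)
    {q : ℕ × ℕ} (hq : q.1 + q.2 + 1 ≤ n) :
    HasDerivAt (fun u => mixedPartial F q (u, y u))
      (mixedPartial F (q.1 + 1, q.2) (x, y x) +
        F (x, y x) * mixedPartial F (q.1, q.2 + 1) (x, y x)) x := by
  have hdiff : Differentiable ℝ (mixedPartial F q) :=
    (contDiff_mixedPartial (m := 1) (hF.of_le (by norm_cast; omega))).differentiable one_ne_zero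
  have hcurve : HasDerivAt (fun u => (u, y u)) ((1 : ℝ), F (x, y x)) x :=
    (hasDerivAt_id x).prodMk hy
  have hdir : ((1 : ℝ), F (x, y x)) = ((1 : ℝ), (0 : ℝ)) + F (x, y x) • ((0 : ℝ), (1 : ℝ)) := by
    simp
  refine ((hdiff _).hasFDerivAt.comp_hasDerivAt x hcurve).congr_deriv ?_
  rw [hdir, map_add, map_smul, ← partialDeriv_fst_mixedPartial,
    ← partialDeriv_snd_mixedPartial hF hq]
  rfl

theorem hasDerivAt_evalMonomial_comp (hF : ContDiff ℝ n F) (hy : HasDerivAt y (F (x, y x)) x)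
    {m : Monomial} (hm : ∀ q ∈ m, q.1 + q.2 + 1 ≤ n) :
    HasDerivAt (fun u => evalMonomial F m (u, y u)) (evalSum F (derivMonomial m) (x, y x)) x := by
  induction m with
  | nil => exact hasDerivAt_const x 1
  | cons q t ih =>
    simp only [List.mem_cons, forall_eq_or_imp] at hm
    refine ((hasDerivAt_mixedPartial_comp hF hy hm.1).mul (ih hm.2)).congr_deriv ?_
    rw [derivMonomial, evalSum_cons, evalSum_cons, evalSum_map_cons]
    simp only [evalMonomial_cons, mixedPartial_zero]
    ring

theorem hasDerivAt_evalSum_comp (hF : ContDiff ℝ n F) (hy : HasDerivAt y (F (x, y x)) x)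
    {E : List Monomial} (hE : ∀ m ∈ E, ∀ q ∈ m, q.1 + q.2 + 1 ≤ n) :
    HasDerivAt (fun u => evalSum F E (u, y u))
      (evalSum F (E.flatMap derivMonomial) (x, y x)) x := by
  induction E with
  | nil => exact hasDerivAt_const x 0
  | cons m E ih =>
    simp only [List.mem_cons, forall_eq_or_imp] at hE
    refine ((hasDerivAt_evalMonomial_comp hF hy hE.1).add (ih hE.2)).congr_deriv ?_
    simp [evalSum]

end Solution

theorem iteratedDerivWithin_eq_evalSum {F : ℝ × ℝ → ℝ} {n : ℕ} (hF : ContDiff ℝ n F)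
    {y : ℝ → ℝ} {s : Set ℝ} (hs : UniqueDiffOn ℝ s) (hy : ∀ x ∈ s, HasDerivAt y (F (x, y x)) x)
    {j : ℕ} (hj : j ≤ n) {x : ℝ} (hx : x ∈ s) :
    iteratedDerivWithin (j + 1) y s x = evalSum F (solutionDerivExpr j) (x, y x) := by
  induction j generalizing x with
  | zero =>
    rw [iteratedDerivWithin_one, ((hy x hx).hasDerivWithinAt.derivWithin (hs x hx))]
    simp [solutionDerivExpr, evalSum, evalMonomial, mixedPartial_zero]
  | succ j ih =>
    have hE : ∀ m ∈ solutionDerivExpr j, ∀ q ∈ m, q.1 + q.2 + 1 ≤ n := fun m hm q hq =>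
      by have := order_le_of_mem_solutionDerivExpr hm q hq; omega
    rw [iteratedDerivWithin_succ,
      derivWithin_congr (fun u hu => ih (by omega) hu) (ih (by omega) hx),
      (hasDerivAt_evalSum_comp hF (hy x hx) hE).hasDerivWithinAt.derivWithin (hs x hx)]
    rfl

theorem abs_evalMonomial_le_one {G : ℝ × ℝ → ℝ} {p : ℝ × ℝ} {m : Monomial}
    (h : ∀ q ∈ m, |mixedPartial G q p| ≤ 1) : |evalMonomial G m p| ≤ 1 := by
  induction m with
  | nil => simp [evalMonomial]
  | cons q t ih =>
    simp only [List.mem_cons, forall_eq_or_imp] at h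
    rw [evalMonomial_cons, abs_mul]
    exact mul_le_one₀ h.1 (abs_nonneg _) (ih h.2)

theorem abs_evalSum_le_length {G : ℝ × ℝ → ℝ} {p : ℝ × ℝ} {E : List Monomial}
    (h : ∀ m ∈ E, ∀ q ∈ m, |mixedPartial G q p| ≤ 1) : |evalSum G E p| ≤ E.length := by
  induction E with
  | nil => simp [evalSum]
  | cons m E ih =>
    simp only [List.mem_cons, forall_eq_or_imp] at h
    rw [evalSum_cons, List.length_cons, Nat.cast_succ, add_comm _ (1 : ℝ)]
    exact (abs_add_le _ _).trans (add_le_add (abs_evalMonomial_le_one h.1) (ih h.2))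

end NonautonomousODE

open NonautonomousODE in
theorem nonautonomous_factorial_derivative_bound_general
    (β : ℕ) (f : ℝ → ℝ → ℝ) (y : ℝ → ℝ) (x₀ y₀ a b : ℝ) (ha : 0 < a)
    (hf : ContDiff ℝ (β : ℕ∞) (Function.uncurry f))
    (hbd : ∀ p₁ p₂ : ℕ, p₁ + p₂ ≤ β → ∀ x ∈ Icc (x₀ - a) (x₀ + a),
      ∀ z ∈ Icc (y₀ - b) (y₀ + b), |Dp f p₁ p₂ x z| ≤ 1)
    (hode : ∀ x ∈ Icc (x₀ - a) (x₀ + a), HasDerivAt y (f x (y x)) x)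
    (htraj : ∀ x ∈ Icc (x₀ - a) (x₀ + a), y x ∈ Icc (y₀ - b) (y₀ + b)) :
    ∀ k, 1 ≤ k → k ≤ β + 1 → ∀ x ∈ Icc (x₀ - min a b) (x₀ + min a b),
      |iteratedDerivWithin k y (Icc (x₀ - a) (x₀ + a)) x| ≤
        2 ^ (k - 1) * (k - 1).factorial := by
  intro k hk1 hk x hx
  obtain ⟨j, rfl⟩ : ∃ j, k = j + 1 := ⟨k - 1, by omega⟩
  have hxs : x ∈ Icc (x₀ - a) (x₀ + a) :=
    Icc_subset_Icc (by linarith [min_le_left a b]) (by linarith [min_le_left a b]) hx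
  have hfactor : ∀ m ∈ solutionDerivExpr j, ∀ q ∈ m,
      |mixedPartial (Function.uncurry f) q (x, y x)| ≤ 1 := fun m hm q hq => by
    have hq' : q.1 + q.2 ≤ β := (order_le_of_mem_solutionDerivExpr hm q hq).trans (by omega)
    simpa [← Dp_eq_mixedPartial hf hq'] using hbd q.1 q.2 hq' x hxs (y x) (htraj x hxs)
  rw [iteratedDerivWithin_eq_evalSum hf (uniqueDiffOn_Icc (by linarith)) hode (by omega) hxs]
  calc _ ≤ ((solutionDerivExpr j).length : ℝ) := abs_evalSum_le_length hfactor
    _ ≤ 2 ^ j * j.factorial := by exact_mod_cast length_solutionDerivExpr_le j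
    _ = 2 ^ (j + 1 - 1) * (j + 1 - 1).factorial := by simp

theorem nonautonomous_factorial_derivative_bound
    (β : ℕ) (f : ℝ → ℝ → ℝ) (y : ℝ → ℝ) (x₀ y₀ a b : ℝ) (ha : 0 < a) (hb : 0 < b)
    (hf : ContDiff ℝ (β : ℕ∞) (Function.uncurry f))
    (hcont : ContinuousOn (Function.uncurry f) (Icc (x₀ - a) (x₀ + a) ×ˢ Icc (y₀ - b) (y₀ + b)))
    (hbd : ∀ p₁ p₂ : ℕ, p₁ + p₂ ≤ β → ∀ x ∈ Icc (x₀ - a) (x₀ + a),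
      ∀ z ∈ Icc (y₀ - b) (y₀ + b), |Dp f p₁ p₂ x z| ≤ 1)
    (hlip : ∀ p₁ p₂ : ℕ, p₁ + p₂ = β → ∀ x ∈ Icc (x₀ - a) (x₀ + a),
      ∀ x' ∈ Icc (x₀ - a) (x₀ + a), ∀ z ∈ Icc (y₀ - b) (y₀ + b), ∀ z' ∈ Icc (y₀ - b) (y₀ + b),
      |Dp f p₁ p₂ x z - Dp f p₁ p₂ x' z'| ≤ max |x - x'| |z - z'|)
    (hy0 : y x₀ = y₀)
    (hode : ∀ x ∈ Icc (x₀ - a) (x₀ + a), HasDerivAt y (f x (y x)) x)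
    (htraj : ∀ x ∈ Icc (x₀ - a) (x₀ + a), y x ∈ Icc (y₀ - b) (y₀ + b)) :
    ∀ k, 1 ≤ k → k ≤ β + 1 → ∀ x ∈ Icc (x₀ - min a b) (x₀ + min a b),
      |iteratedDerivWithin k y (Icc (x₀ - a) (x₀ + a)) x| ≤
        2 ^ (k - 1) * (k - 1).factorial :=
  nonautonomous_factorial_derivative_bound_general β f y x₀ y₀ a b ha hf hbd hode htraj
end

section
/- Under the hypotheses of the nonautonomous factorial bound (f continuous with all partial derivatives of order ≤ β bounded by 1 in absolute value, and all β-th order partials Lipschitz with constant 1 in the max-metric), the solution y of y' = f(x, y) satisfies |y^(β+1)(x) - y^(β+1)(x')| ≤ 2^{β+1}(β+1)! · |x - x'| for all x, x' ∈ [x₀-α, x₀+α] with α = min(a,b). -/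
/-! Differentiating `y' = f(x, y)` repeatedly gives `y⁽ᵏ⁺¹⁾(x) = gₖ(x, y(x))` with `g₀ = f` and
`gₖ₊₁ = ∂_x gₖ + f ∂_z gₖ`. By the two-variable Leibniz rule and the binomial theorem, induction on
`k` shows that the partials of `gₖ` of order `|p| ≤ β - k` are bounded by `2ᵏ k! (k+1)^|p|` and,
in the max-metric, Lipschitz with twice the bound of order `|p| + 1`. For `k = β`, `p = 0` this
is the constant `2^(β+1) (β+1)!`, and `|y(x) - y(x')| ≤ |x - x'|` since `|f| ≤ 1`. -/

open Set

open Function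

noncomputable def partialFst (f : ℝ → ℝ → ℝ) : ℝ → ℝ → ℝ := fun x z => deriv (fun u => f u z) x

noncomputable def partialSnd (f : ℝ → ℝ → ℝ) : ℝ → ℝ → ℝ := fun x z => deriv (f x) z

lemma iteratedDeriv_fst_eq_partialFst_iterate (f : ℝ → ℝ → ℝ) (n : ℕ) (x z : ℝ) :
    iteratedDeriv n (fun u => f u z) x = partialFst^[n] f x z := by
  induction n generalizing x with
  | zero => rfl
  | succ n ih => simp only [iteratedDeriv_succ, iterate_succ_apply', partialFst, ← funext ih]

lemma iteratedDeriv_snd_eq_partialSnd_iterate (f : ℝ → ℝ → ℝ) (n : ℕ) (x z : ℝ) :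
    iteratedDeriv n (f x) z = partialSnd^[n] f x z := by
  induction n generalizing z with
  | zero => rfl
  | succ n ih => simp only [iteratedDeriv_succ, iterate_succ_apply', partialSnd, ← funext ih]

lemma Dp_eq_iterate (f : ℝ → ℝ → ℝ) (p₁ p₂ : ℕ) :
    Dp f p₁ p₂ = partialFst^[p₁] (partialSnd^[p₂] f) := by
  ext x z
  simp only [Dp, iteratedDeriv_snd_eq_partialSnd_iterate, iteratedDeriv_fst_eq_partialFst_iterate]

lemma DifferentiableAt.hasDerivAt_comp_prodMk_left {E : Type*} [NormedAddCommGroup E]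
    [NormedSpace ℝ E] {F : ℝ × ℝ → E} {x z : ℝ} (h : DifferentiableAt ℝ F (x, z)) :
    HasDerivAt (fun u => F (u, z)) (fderiv ℝ F (x, z) (1, 0)) x :=
  h.hasFDerivAt.comp_hasDerivAt x ((hasDerivAt_id x).prodMk (hasDerivAt_const x z))

lemma DifferentiableAt.hasDerivAt_comp_prodMk_right {E : Type*} [NormedAddCommGroup E]
    [NormedSpace ℝ E] {F : ℝ × ℝ → E} {x z : ℝ} (h : DifferentiableAt ℝ F (x, z)) :
    HasDerivAt (fun w => F (x, w)) (fderiv ℝ F (x, z) (0, 1)) z :=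
  h.hasFDerivAt.comp_hasDerivAt z ((hasDerivAt_const z x).prodMk (hasDerivAt_id z))

lemma partialFst_eq_fderiv {f : ℝ → ℝ → ℝ} {x z : ℝ}
    (h : DifferentiableAt ℝ (uncurry f) (x, z)) :
    partialFst f x z = fderiv ℝ (uncurry f) (x, z) (1, 0) :=
  h.hasDerivAt_comp_prodMk_left.deriv

lemma partialSnd_eq_fderiv {f : ℝ → ℝ → ℝ} {x z : ℝ}
    (h : DifferentiableAt ℝ (uncurry f) (x, z)) :
    partialSnd f x z = fderiv ℝ (uncurry f) (x, z) (0, 1) :=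
  h.hasDerivAt_comp_prodMk_right.deriv

lemma ContDiff.uncurry_partialFst {n : ℕ} {f : ℝ → ℝ → ℝ}
    (hf : ContDiff ℝ (n + 1) (uncurry f)) : ContDiff ℝ n (uncurry (partialFst f)) := by
  have : uncurry (partialFst f) = fun p => fderiv ℝ (uncurry f) p (1, 0) :=
    funext fun p => partialFst_eq_fderiv (hf.differentiable (by simp) p)
  rw [this]
  exact (hf.fderiv_right le_rfl).clm_apply contDiff_const

lemma ContDiff.uncurry_partialSnd {n : ℕ} {f : ℝ → ℝ → ℝ}
    (hf : ContDiff ℝ (n + 1) (uncurry f)) : ContDiff ℝ n (uncurry (partialSnd f)) := by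
  have : uncurry (partialSnd f) = fun p => fderiv ℝ (uncurry f) p (0, 1) :=
    funext fun p => partialSnd_eq_fderiv (hf.differentiable (by simp) p)
  rw [this]
  exact (hf.fderiv_right le_rfl).clm_apply contDiff_const

lemma ContDiff.uncurry_partialFst_iterate {n j : ℕ} {f : ℝ → ℝ → ℝ}
    (hf : ContDiff ℝ (n + j : ℕ) (uncurry f)) : ContDiff ℝ n (uncurry (partialFst^[j] f)) := by
  induction j generalizing f with
  | zero => exact hf
  | succ j ih =>
    rw [iterate_succ_apply]
    exact ih (ContDiff.uncurry_partialFst (by exact_mod_cast hf))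

lemma ContDiff.uncurry_partialSnd_iterate {n j : ℕ} {f : ℝ → ℝ → ℝ}
    (hf : ContDiff ℝ (n + j : ℕ) (uncurry f)) : ContDiff ℝ n (uncurry (partialSnd^[j] f)) := by
  induction j generalizing f with
  | zero => exact hf
  | succ j ih =>
    rw [iterate_succ_apply]
    exact ih (ContDiff.uncurry_partialSnd (by exact_mod_cast hf))

lemma ContDiff.uncurry_Dp {n p₁ p₂ : ℕ} {f : ℝ → ℝ → ℝ}
    (hf : ContDiff ℝ (n + p₁ + p₂ : ℕ) (uncurry f)) : ContDiff ℝ n (uncurry (Dp f p₁ p₂)) := by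
  rw [Dp_eq_iterate]
  exact (ContDiff.uncurry_partialSnd_iterate hf).uncurry_partialFst_iterate

lemma partialFst_partialSnd_comm {f : ℝ → ℝ → ℝ} (hf : ContDiff ℝ 2 (uncurry f)) :
    partialFst (partialSnd f) = partialSnd (partialFst f) := by
  ext x z
  have hd : Differentiable ℝ (uncurry f) := hf.differentiable (by norm_num)
  have hd' : Differentiable ℝ (fderiv ℝ (uncurry f)) :=
    (hf.fderiv_right (m := 1) (by norm_num)).differentiable one_ne_zero
  have hsymm := second_derivative_symmetric (fun p => (hd p).hasFDerivAt)
    (hd' (x, z)).hasFDerivAt ((1 : ℝ), (0 : ℝ)) ((0 : ℝ), (1 : ℝ))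
  calc partialFst (partialSnd f) x z
      = deriv (fun u => fderiv ℝ (uncurry f) (u, z) (0, 1)) x := by
        simp only [partialFst, funext fun u => partialSnd_eq_fderiv (hd (u, z))]
    _ = fderiv ℝ (fderiv ℝ (uncurry f)) (x, z) (1, 0) (0, 1) :=
        ((hd' (x, z)).hasDerivAt_comp_prodMk_left.clm_apply (hasDerivAt_const x _)).deriv.trans
          (by simp)
    _ = fderiv ℝ (fderiv ℝ (uncurry f)) (x, z) (0, 1) (1, 0) := hsymm
    _ = deriv (fun w => fderiv ℝ (uncurry f) (x, w) (1, 0)) z :=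
        (((hd' (x, z)).hasDerivAt_comp_prodMk_right.clm_apply (hasDerivAt_const z _)).deriv.trans
          (by simp)).symm
    _ = partialSnd (partialFst f) x z := by
        simp only [partialSnd, funext fun w => partialFst_eq_fderiv (hd (x, w))]

lemma partialSnd_iterate_partialFst {j : ℕ} {f : ℝ → ℝ → ℝ}
    (hf : ContDiff ℝ (j + 1 : ℕ) (uncurry f)) :
    partialSnd^[j] (partialFst f) = partialFst (partialSnd^[j] f) := by
  induction j generalizing f with
  | zero => rfl
  | succ j ih =>
    rw [iterate_succ_apply, iterate_succ_apply,
      ← partialFst_partialSnd_comm (hf.of_le (by exact_mod_cast (by omega : 2 ≤ j + 1 + 1)))]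
    exact ih (ContDiff.uncurry_partialSnd (by exact_mod_cast hf))

lemma partialFst_iterate_partialSnd {j : ℕ} {f : ℝ → ℝ → ℝ}
    (hf : ContDiff ℝ (j + 1 : ℕ) (uncurry f)) :
    partialFst^[j] (partialSnd f) = partialSnd (partialFst^[j] f) := by
  induction j generalizing f with
  | zero => rfl
  | succ j ih =>
    rw [iterate_succ_apply, iterate_succ_apply,
      partialFst_partialSnd_comm (hf.of_le (by exact_mod_cast (by omega : 2 ≤ j + 1 + 1)))]
    exact ih (ContDiff.uncurry_partialFst (by exact_mod_cast hf))

lemma partialFst_Dp (f : ℝ → ℝ → ℝ) (p₁ p₂ : ℕ) :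
    partialFst (Dp f p₁ p₂) = Dp f (p₁ + 1) p₂ := by
  rw [Dp_eq_iterate, Dp_eq_iterate, iterate_succ_apply']

lemma Dp_partialSnd (f : ℝ → ℝ → ℝ) (p₁ p₂ : ℕ) :
    Dp (partialSnd f) p₁ p₂ = Dp f p₁ (p₂ + 1) := by
  rw [Dp_eq_iterate, Dp_eq_iterate, iterate_succ_apply]

lemma Dp_partialFst {p₁ p₂ : ℕ} {f : ℝ → ℝ → ℝ} (hf : ContDiff ℝ (p₂ + 1 : ℕ) (uncurry f)) :
    Dp (partialFst f) p₁ p₂ = Dp f (p₁ + 1) p₂ := by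
  rw [Dp_eq_iterate, Dp_eq_iterate, partialSnd_iterate_partialFst hf, iterate_succ_apply]

lemma partialSnd_Dp {p₁ p₂ : ℕ} {f : ℝ → ℝ → ℝ}
    (hf : ContDiff ℝ (p₁ + p₂ + 1 : ℕ) (uncurry f)) :
    partialSnd (Dp f p₁ p₂) = Dp f p₁ (p₂ + 1) := by
  rw [Dp_eq_iterate, Dp_eq_iterate, ← partialFst_iterate_partialSnd,
    ← iterate_succ_apply' partialSnd]
  exact ContDiff.uncurry_partialSnd_iterate (by rwa [show p₁ + 1 + p₂ = p₁ + p₂ + 1 by omega])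

lemma ContDiff.iteratedDeriv_snd_of_uncurry {n q : ℕ} {f : ℝ → ℝ → ℝ}
    (hf : ContDiff ℝ (n + q : ℕ) (uncurry f)) (z : ℝ) :
    ContDiff ℝ n (fun u => iteratedDeriv q (f u) z) := by
  have := ContDiff.uncurry_Dp (p₁ := 0) (p₂ := q) hf
  simpa [Dp, Function.comp_def] using this.comp (contDiff_id.prodMk (contDiff_const (c := z)))

lemma ContDiff.of_uncurry {n : WithTop ℕ∞} {f : ℝ → ℝ → ℝ} (hf : ContDiff ℝ n (uncurry f))
    (x : ℝ) : ContDiff ℝ n (f x) :=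
  hf.comp (contDiff_const.prodMk contDiff_id)

noncomputable def leibnizSum (p₁ p₂ : ℕ) (F : ℕ → ℕ → ℝ) : ℝ :=
  ∑ q₁ ∈ Finset.range (p₁ + 1), ∑ q₂ ∈ Finset.range (p₂ + 1),
    (p₁.choose q₁ : ℝ) * p₂.choose q₂ * F q₁ q₂

lemma leibnizSum_sub (p₁ p₂ : ℕ) (F G : ℕ → ℕ → ℝ) :
    leibnizSum p₁ p₂ F - leibnizSum p₁ p₂ G
      = leibnizSum p₁ p₂ (fun q₁ q₂ => F q₁ q₂ - G q₁ q₂) := by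
  simp only [leibnizSum, ← Finset.sum_sub_distrib, mul_sub]

lemma sum_range_choose_mul_pow (p : ℕ) (t : ℝ) :
    ∑ q ∈ Finset.range (p + 1), (p.choose q : ℝ) * t ^ (p - q) = (1 + t) ^ p := by
  rw [add_pow]
  exact Finset.sum_congr rfl fun q _ => by ring

lemma abs_leibnizSum_le {p₁ p₂ : ℕ} {F : ℕ → ℕ → ℝ} {K t : ℝ}
    (hF : ∀ q₁ ≤ p₁, ∀ q₂ ≤ p₂, |F q₁ q₂| ≤ K * t ^ (p₁ - q₁ + (p₂ - q₂))) :
    |leibnizSum p₁ p₂ F| ≤ K * (1 + t) ^ (p₁ + p₂) := by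
  calc |leibnizSum p₁ p₂ F|
      ≤ ∑ q₁ ∈ Finset.range (p₁ + 1), ∑ q₂ ∈ Finset.range (p₂ + 1),
          (p₁.choose q₁ : ℝ) * p₂.choose q₂ * (K * t ^ (p₁ - q₁ + (p₂ - q₂))) := by
        refine (Finset.abs_sum_le_sum_abs _ _).trans (Finset.sum_le_sum fun q₁ hq₁ => ?_)
        refine (Finset.abs_sum_le_sum_abs _ _).trans (Finset.sum_le_sum fun q₂ hq₂ => ?_)
        rw [abs_mul, abs_of_nonneg (by positivity)]
        gcongr
        exact hF q₁ (Nat.lt_succ_iff.mp (Finset.mem_range.mp hq₁)) q₂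
          (Nat.lt_succ_iff.mp (Finset.mem_range.mp hq₂))
    _ = K * (1 + t) ^ (p₁ + p₂) := by
        rw [pow_add, ← sum_range_choose_mul_pow, ← sum_range_choose_mul_pow, Finset.sum_mul_sum,
          Finset.mul_sum]
        refine Finset.sum_congr rfl fun q₁ _ => ?_
        rw [Finset.mul_sum]
        exact Finset.sum_congr rfl fun q₂ _ => by ring

lemma Dp_add {n p₁ p₂ : ℕ} {f g : ℝ → ℝ → ℝ} (hf : ContDiff ℝ n (uncurry f))
    (hg : ContDiff ℝ n (uncurry g)) (hp : p₁ + p₂ ≤ n) (x z : ℝ) :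
    Dp (fun x z => f x z + g x z) p₁ p₂ x z = Dp f p₁ p₂ x z + Dp g p₁ p₂ x z := by
  have inner : (fun u => iteratedDeriv p₂ (fun w => f u w + g u w) z)
      = fun u => iteratedDeriv p₂ (f u) z + iteratedDeriv p₂ (g u) z := funext fun u =>
    iteratedDeriv_fun_add ((hf.of_uncurry u).of_le (by exact_mod_cast (by omega))).contDiffAt
      ((hg.of_uncurry u).of_le (by exact_mod_cast (by omega))).contDiffAt
  rw [Dp, inner, iteratedDeriv_fun_add
    (ContDiff.iteratedDeriv_snd_of_uncurry (hf.of_le (by exact_mod_cast hp)) z).contDiffAt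
    (ContDiff.iteratedDeriv_snd_of_uncurry (hg.of_le (by exact_mod_cast hp)) z).contDiffAt]
  rfl

lemma Dp_mul {n p₁ p₂ : ℕ} {f g : ℝ → ℝ → ℝ} (hf : ContDiff ℝ n (uncurry f))
    (hg : ContDiff ℝ n (uncurry g)) (hp : p₁ + p₂ ≤ n) (x z : ℝ) :
    Dp (fun x z => f x z * g x z) p₁ p₂ x z
      = leibnizSum p₁ p₂ (fun q₁ q₂ => Dp f q₁ q₂ x z * Dp g (p₁ - q₁) (p₂ - q₂) x z) := by
  have slice {h : ℝ → ℝ → ℝ} (hh : ContDiff ℝ n (uncurry h)) (q : ℕ) (hq : q ≤ p₂) :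
      ContDiff ℝ p₁ (fun u => iteratedDeriv q (h u) z) :=
    ContDiff.iteratedDeriv_snd_of_uncurry (hh.of_le (by exact_mod_cast (by omega))) z
  have inner : (fun u => iteratedDeriv p₂ (fun w => f u w * g u w) z)
      = fun u => ∑ q₂ ∈ Finset.range (p₂ + 1),
          (p₂.choose q₂ : ℝ) * (iteratedDeriv q₂ (f u) z * iteratedDeriv (p₂ - q₂) (g u) z) :=
    funext fun u => by
      rw [iteratedDeriv_fun_mul
        ((hf.of_uncurry u).of_le (by exact_mod_cast (by omega))).contDiffAt
        ((hg.of_uncurry u).of_le (by exact_mod_cast (by omega))).contDiffAt]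
      simp only [mul_assoc]
  rw [Dp, inner, iteratedDeriv_fun_sum, leibnizSum, Finset.sum_comm]
  · refine Finset.sum_congr rfl fun q₂ hq₂ => ?_
    have hq₂ : q₂ ≤ p₂ := Nat.lt_succ_iff.mp (Finset.mem_range.mp hq₂)
    rw [iteratedDeriv_const_mul _ ((slice hf q₂ hq₂).mul (slice hg _ (by omega))).contDiffAt,
      iteratedDeriv_fun_mul (slice hf q₂ hq₂).contDiffAt (slice hg _ (by omega)).contDiffAt,
      Finset.mul_sum]
    exact Finset.sum_congr rfl fun q₁ _ => by simp only [Dp]; ring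
  · intro q₂ hq₂
    have hq₂ : q₂ ≤ p₂ := Nat.lt_succ_iff.mp (Finset.mem_range.mp hq₂)
    exact (contDiff_const.mul ((slice hf q₂ hq₂).mul (slice hg _ (by omega)))).contDiffAt

lemma abs_mul_sub_mul_le_s4 (u v u' v' : ℝ) :
    |u * v - u' * v'| ≤ |u| * |v - v'| + |v'| * |u - u'| := by
  calc |u * v - u' * v'| = |u * (v - v') + v' * (u - u')| := by ring_nf
    _ ≤ |u| * |v - v'| + |v'| * |u - u'| := by
      rw [← abs_mul, ← abs_mul]; exact abs_add_le _ _

lemma abs_sub_le_of_abs_partial_le {w : ℝ → ℝ → ℝ} {M : ℝ} {X Z : Set ℝ} (hX : Convex ℝ X)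
    (hZ : Convex ℝ Z) (hw : Differentiable ℝ (uncurry w))
    (hMx : ∀ x ∈ X, ∀ z ∈ Z, |partialFst w x z| ≤ M)
    (hMz : ∀ x ∈ X, ∀ z ∈ Z, |partialSnd w x z| ≤ M)
    {x x' z z' : ℝ} (hx : x ∈ X) (hx' : x' ∈ X) (hz : z ∈ Z) (hz' : z' ∈ Z) :
    |w x z - w x' z'| ≤ 2 * M * max |x - x'| |z - z'| := by
  have h₁ : |w x z - w x' z| ≤ M * |x - x'| :=
    hX.norm_image_sub_le_of_norm_deriv_le (f := fun u => w u z)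
      (fun u _ => (hw (u, z)).hasDerivAt_comp_prodMk_left.differentiableAt)
      (fun u hu => hMx u hu z hz) hx' hx
  have h₂ : |w x' z - w x' z'| ≤ M * |z - z'| :=
    hZ.norm_image_sub_le_of_norm_deriv_le (f := w x')
      (fun v _ => (hw (x', v)).hasDerivAt_comp_prodMk_right.differentiableAt)
      (fun v hv => hMz x' hx' v hv) hz' hz
  have hM : 0 ≤ M := (abs_nonneg _).trans (hMx x hx z hz)
  calc |w x z - w x' z'| ≤ |w x z - w x' z| + |w x' z - w x' z'| := abs_sub_le _ _ _
    _ ≤ M * (|x - x'| + |z - z'|) := by linarith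
    _ ≤ 2 * M * max |x - x'| |z - z'| := by
      nlinarith [le_max_left |x - x'| |z - z'|, le_max_right |x - x'| |z - z'|]

noncomputable def flowDeriv (f g : ℝ → ℝ → ℝ) : ℝ → ℝ → ℝ :=
  fun x z => partialFst g x z + f x z * partialSnd g x z

lemma ContDiff.uncurry_flowDeriv {n : ℕ} {f g : ℝ → ℝ → ℝ} (hf : ContDiff ℝ n (uncurry f))
    (hg : ContDiff ℝ (n + 1) (uncurry g)) : ContDiff ℝ n (uncurry (flowDeriv f g)) :=
  hg.uncurry_partialFst.add (hf.mul hg.uncurry_partialSnd)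

lemma ContDiff.uncurry_flowDeriv_iterate {β k : ℕ} {f : ℝ → ℝ → ℝ}
    (hf : ContDiff ℝ β (uncurry f)) (hk : k ≤ β) :
    ContDiff ℝ (β - k : ℕ) (uncurry ((flowDeriv f)^[k] f)) := by
  induction k with
  | zero => exact hf
  | succ k ih =>
    rw [iterate_succ_apply']
    refine (hf.of_le (by exact_mod_cast Nat.sub_le β (k + 1))).uncurry_flowDeriv ?_
    exact_mod_cast (show β - (k + 1) + 1 = β - k by omega) ▸ ih (by omega)

lemma Dp_flowDeriv {n p₁ p₂ : ℕ} {f g : ℝ → ℝ → ℝ} (hf : ContDiff ℝ n (uncurry f))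
    (hg : ContDiff ℝ (n + 1) (uncurry g)) (hp : p₁ + p₂ ≤ n) (x z : ℝ) :
    Dp (flowDeriv f g) p₁ p₂ x z = Dp g (p₁ + 1) p₂ x z
      + leibnizSum p₁ p₂ (fun q₁ q₂ => Dp f q₁ q₂ x z * Dp g (p₁ - q₁) (p₂ - q₂ + 1) x z) := by
  show Dp (fun x z => partialFst g x z + f x z * partialSnd g x z) p₁ p₂ x z = _
  rw [Dp_add (g := fun x z => f x z * partialSnd g x z) hg.uncurry_partialFst
      (hf.mul hg.uncurry_partialSnd) hp,
    Dp_partialFst (hg.of_le (by exact_mod_cast (by omega))), Dp_mul hf hg.uncurry_partialSnd hp]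
  simp only [Dp_partialSnd]

/-- The Lipschitz constant `2 * M * c ^ (p₁ + p₂ + 1)` is the one the mean value theorem gives
from the bound at order `p₁ + p₂ + 1`; at the top order `n` it is a separate requirement. -/
def HasDpBoundsOn (X Z : Set ℝ) (w : ℝ → ℝ → ℝ) (n : ℕ) (M c : ℝ) : Prop :=
  ∀ p₁ p₂, p₁ + p₂ ≤ n →
    (∀ x ∈ X, ∀ z ∈ Z, |Dp w p₁ p₂ x z| ≤ M * c ^ (p₁ + p₂)) ∧
    ∀ x ∈ X, ∀ x' ∈ X, ∀ z ∈ Z, ∀ z' ∈ Z,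
      |Dp w p₁ p₂ x z - Dp w p₁ p₂ x' z'| ≤ 2 * M * c ^ (p₁ + p₂ + 1) * max |x - x'| |z - z'|

lemma HasDpBoundsOn.mono {X Z : Set ℝ} {w : ℝ → ℝ → ℝ} {m n : ℕ} {M c : ℝ}
    (h : HasDpBoundsOn X Z w n M c) (hmn : m ≤ n) : HasDpBoundsOn X Z w m M c :=
  fun p₁ p₂ hp => h p₁ p₂ (hp.trans hmn)

lemma hasDpBoundsOn_of_abs_Dp_le_one {X Z : Set ℝ} {f : ℝ → ℝ → ℝ} {n : ℕ} (hX : Convex ℝ X)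
    (hZ : Convex ℝ Z) (hf : ContDiff ℝ n (uncurry f))
    (hbd : ∀ p₁ p₂ : ℕ, p₁ + p₂ ≤ n → ∀ x ∈ X, ∀ z ∈ Z, |Dp f p₁ p₂ x z| ≤ 1)
    (hlip : ∀ p₁ p₂ : ℕ, p₁ + p₂ = n → ∀ x ∈ X, ∀ x' ∈ X, ∀ z ∈ Z, ∀ z' ∈ Z,
      |Dp f p₁ p₂ x z - Dp f p₁ p₂ x' z'| ≤ max |x - x'| |z - z'|) :
    HasDpBoundsOn X Z f n 1 1 := by
  intro p₁ p₂ hp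
  simp only [one_pow, mul_one]
  refine ⟨hbd p₁ p₂ hp, fun x hx x' hx' z hz z' hz' => ?_⟩
  rcases hp.lt_or_eq with hlt | heq
  · have hf' : ContDiff ℝ (p₁ + p₂ + 1 : ℕ) (uncurry f) := hf.of_le (by exact_mod_cast hlt)
    have hDp : Differentiable ℝ (uncurry (Dp f p₁ p₂)) :=
      (ContDiff.uncurry_Dp (n := 1) (hf'.of_le (by exact_mod_cast (by omega)))).differentiable
        one_ne_zero
    refine (abs_sub_le_of_abs_partial_le (M := 1) hX hZ hDp (fun u hu v hv => ?_)
      (fun u hu v hv => ?_) hx hx' hz hz').trans_eq (by ring)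
    · rw [partialFst_Dp]; exact hbd _ _ (by omega) u hu v hv
    · rw [partialSnd_Dp hf']; exact hbd _ _ (by omega) u hu v hv
  · linarith [hlip p₁ p₂ heq x hx x' hx' z hz z' hz',
      (abs_nonneg (x - x')).trans (le_max_left _ |z - z'|)]

lemma HasDpBoundsOn.abs_Dp_flowDeriv_le {X Z : Set ℝ} {f g : ℝ → ℝ → ℝ} {n p₁ p₂ : ℕ}
    {M c : ℝ} (hf : ContDiff ℝ n (uncurry f)) (hg : ContDiff ℝ (n + 1) (uncurry g))
    (hfB : HasDpBoundsOn X Z f n 1 1) (hgB : HasDpBoundsOn X Z g (n + 1) M c)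
    (hM : 0 ≤ M) (hc : 0 ≤ c) (hp : p₁ + p₂ ≤ n) {x z : ℝ} (hx : x ∈ X) (hz : z ∈ Z) :
    |Dp (flowDeriv f g) p₁ p₂ x z| ≤ 2 * M * c * (c + 1) ^ (p₁ + p₂) := by
  have hS : |leibnizSum p₁ p₂ fun q₁ q₂ => Dp f q₁ q₂ x z * Dp g (p₁ - q₁) (p₂ - q₂ + 1) x z|
      ≤ M * c * (1 + c) ^ (p₁ + p₂) := abs_leibnizSum_le fun q₁ hq₁ q₂ hq₂ => by
    rw [abs_mul]
    calc _ ≤ 1 * 1 ^ (q₁ + q₂) * (M * c ^ (p₁ - q₁ + (p₂ - q₂ + 1))) :=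
          mul_le_mul ((hfB q₁ q₂ (by omega)).1 x hx z hz) ((hgB _ _ (by omega)).1 x hx z hz)
            (abs_nonneg _) (by positivity)
      _ = M * c * c ^ (p₁ - q₁ + (p₂ - q₂)) := by ring
  have hpow : c ^ (p₁ + p₂) ≤ (c + 1) ^ (p₁ + p₂) := pow_le_pow_left₀ hc (by linarith) _
  rw [Dp_flowDeriv hf hg hp]
  calc _ ≤ _ := abs_add_le _ _
    _ ≤ M * c * c ^ (p₁ + p₂) + M * c * (1 + c) ^ (p₁ + p₂) :=
        add_le_add (((hgB (p₁ + 1) p₂ (by omega)).1 x hx z hz).trans_eq (by ring)) hS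
    _ ≤ 2 * M * c * (c + 1) ^ (p₁ + p₂) := by
        rw [add_comm 1 c]
        nlinarith [mul_le_mul_of_nonneg_left hpow (mul_nonneg hM hc)]

lemma HasDpBoundsOn.abs_Dp_flowDeriv_sub_le {X Z : Set ℝ} {f g : ℝ → ℝ → ℝ} {n p₁ p₂ : ℕ}
    {M c : ℝ} (hf : ContDiff ℝ n (uncurry f)) (hg : ContDiff ℝ (n + 1) (uncurry g))
    (hfB : HasDpBoundsOn X Z f n 1 1) (hgB : HasDpBoundsOn X Z g (n + 1) M c)
    (hM : 0 ≤ M) (hc : 0 ≤ c) (hp : p₁ + p₂ ≤ n) {x x' z z' : ℝ} (hx : x ∈ X) (hx' : x' ∈ X)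
    (hz : z ∈ Z) (hz' : z' ∈ Z) :
    |Dp (flowDeriv f g) p₁ p₂ x z - Dp (flowDeriv f g) p₁ p₂ x' z'|
      ≤ 2 * (2 * M * c) * (c + 1) ^ (p₁ + p₂ + 1) * max |x - x'| |z - z'| := by
  set D := max |x - x'| |z - z'|
  have hD : 0 ≤ D := (abs_nonneg _).trans (le_max_left _ _)
  have hS : |(leibnizSum p₁ p₂ fun q₁ q₂ => Dp f q₁ q₂ x z * Dp g (p₁ - q₁) (p₂ - q₂ + 1) x z)
      - leibnizSum p₁ p₂ fun q₁ q₂ => Dp f q₁ q₂ x' z' * Dp g (p₁ - q₁) (p₂ - q₂ + 1) x' z'|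
      ≤ 2 * M * c * (c + 1) * D * (1 + c) ^ (p₁ + p₂) := by
    rw [leibnizSum_sub]
    refine abs_leibnizSum_le fun q₁ hq₁ q₂ hq₂ => ?_
    obtain ⟨hu, huu⟩ := hfB q₁ q₂ (by omega)
    obtain ⟨hv, hvv⟩ := hgB (p₁ - q₁) (p₂ - q₂ + 1) (by omega)
    calc _ ≤ _ := abs_mul_sub_mul_le_s4 _ _ _ _
      _ ≤ 1 * 1 ^ (q₁ + q₂) * (2 * M * c ^ (p₁ - q₁ + (p₂ - q₂ + 1) + 1) * D)
          + M * c ^ (p₁ - q₁ + (p₂ - q₂ + 1)) * (2 * 1 * 1 ^ (q₁ + q₂ + 1) * D) :=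
        add_le_add
          (mul_le_mul (hu x hx z hz) (hvv x hx x' hx' z hz z' hz') (abs_nonneg _) (by simp))
          (mul_le_mul (hv x' hx' z' hz') (huu x hx x' hx' z hz z' hz') (abs_nonneg _)
            (by positivity))
      _ = 2 * M * c * (c + 1) * D * c ^ (p₁ - q₁ + (p₂ - q₂)) := by ring
  have hA : 2 * M * c ^ (p₁ + 1 + p₂ + 1) * D ≤ 2 * M * c * (c + 1) ^ (p₁ + p₂ + 1) * D := by
    rw [show p₁ + 1 + p₂ + 1 = p₁ + p₂ + 1 + 1 by omega, pow_succ]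
    have := pow_le_pow_left₀ hc (le_add_of_nonneg_right zero_le_one) (p₁ + p₂ + 1)
    have : 0 ≤ 2 * M * c * D := by positivity
    nlinarith
  rw [Dp_flowDeriv hf hg hp, Dp_flowDeriv hf hg hp, add_sub_add_comm]
  calc _ ≤ _ := abs_add_le _ _
    _ ≤ 2 * M * c * (c + 1) ^ (p₁ + p₂ + 1) * D
        + 2 * M * c * (c + 1) * D * (1 + c) ^ (p₁ + p₂) :=
      add_le_add (((hgB (p₁ + 1) p₂ (by omega)).2 x hx x' hx' z hz z' hz').trans hA) hS
    _ = 2 * (2 * M * c) * (c + 1) ^ (p₁ + p₂ + 1) * D := by ring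

lemma HasDpBoundsOn.flowDeriv {X Z : Set ℝ} {f g : ℝ → ℝ → ℝ} {n : ℕ} {M c : ℝ}
    (hf : ContDiff ℝ n (uncurry f)) (hg : ContDiff ℝ (n + 1) (uncurry g))
    (hfB : HasDpBoundsOn X Z f n 1 1) (hgB : HasDpBoundsOn X Z g (n + 1) M c)
    (hM : 0 ≤ M) (hc : 0 ≤ c) :
    HasDpBoundsOn X Z (flowDeriv f g) n (2 * M * c) (c + 1) := fun _ _ hp =>
  ⟨fun _ hx _ hz => hfB.abs_Dp_flowDeriv_le hf hg hgB hM hc hp hx hz,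
    fun _ hx _ hx' _ hz _ hz' => hfB.abs_Dp_flowDeriv_sub_le hf hg hgB hM hc hp hx hx' hz hz'⟩

lemma hasDpBoundsOn_flowDeriv_iterate {X Z : Set ℝ} {f : ℝ → ℝ → ℝ} {β : ℕ}
    (hf : ContDiff ℝ β (uncurry f)) (hfB : HasDpBoundsOn X Z f β 1 1) {k : ℕ} (hk : k ≤ β) :
    HasDpBoundsOn X Z ((flowDeriv f)^[k] f) (β - k) (2 ^ k * k.factorial) (k + 1) := by
  induction k with
  | zero => simpa using hfB
  | succ k ih =>
    have hβk : β - k = β - (k + 1) + 1 := by omega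
    have hg := ContDiff.uncurry_flowDeriv_iterate hf (k := k) (by omega)
    rw [hβk] at hg ih
    have := HasDpBoundsOn.flowDeriv (hf.of_le (by exact_mod_cast Nat.sub_le β (k + 1)))
      (by exact_mod_cast hg) (hfB.mono (Nat.sub_le β (k + 1))) (ih (by omega)) (by positivity)
      (by positivity)
    rw [iterate_succ_apply']
    convert this using 1 <;> push_cast [Nat.factorial_succ, pow_succ] <;> ring

lemma hasDerivAt_comp_solution {f g : ℝ → ℝ → ℝ} {y : ℝ → ℝ} {x : ℝ}
    (hg : DifferentiableAt ℝ (uncurry g) (x, y x)) (hy : HasDerivAt y (f x (y x)) x) :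
    HasDerivAt (fun t => g t (y t)) (flowDeriv f g x (y x)) x := by
  refine (hg.hasFDerivAt.comp_hasDerivAt x ((hasDerivAt_id' x).prodMk hy)).congr_deriv ?_
  rw [show ((1 : ℝ), f x (y x)) = ((1 : ℝ), (0 : ℝ)) + f x (y x) • ((0 : ℝ), (1 : ℝ)) by simp,
    map_add, map_smul, ← partialFst_eq_fderiv hg, ← partialSnd_eq_fderiv hg]
  rfl

lemma iteratedDerivWithin_succ_eq_flowDeriv_iterate {β : ℕ} {f : ℝ → ℝ → ℝ} {y : ℝ → ℝ}
    {s : Set ℝ} (hs : UniqueDiffOn ℝ s) (hf : ContDiff ℝ β (uncurry f))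
    (hode : ∀ x ∈ s, HasDerivAt y (f x (y x)) x) {k : ℕ} (hk : k ≤ β) {x : ℝ} (hx : x ∈ s) :
    iteratedDerivWithin (k + 1) y s x = (flowDeriv f)^[k] f x (y x) := by
  induction k generalizing x with
  | zero => simpa using (hode x hx).hasDerivWithinAt.derivWithin (hs x hx)
  | succ k ih =>
    have hEq : EqOn (iteratedDerivWithin (k + 1) y s) (fun t => (flowDeriv f)^[k] f t (y t)) s :=
      fun t ht => ih (by omega) ht
    have hdiff : Differentiable ℝ (uncurry ((flowDeriv f)^[k] f)) :=
      (ContDiff.uncurry_flowDeriv_iterate hf (k := k) (by omega)).differentiable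
        (by exact_mod_cast (by omega : β - k ≠ 0))
    rw [iteratedDerivWithin_succ, derivWithin_congr hEq (hEq hx), iterate_succ_apply']
    exact (hasDerivAt_comp_solution (hdiff _) (hode x hx)).hasDerivWithinAt.derivWithin (hs x hx)

theorem nonautonomous_top_derivative_lipschitz_general
    (β : ℕ) (f : ℝ → ℝ → ℝ) (y : ℝ → ℝ) (x₀ y₀ a b : ℝ) (ha : 0 < a)
    (hf : ContDiff ℝ (β : ℕ∞) (Function.uncurry f))
    (hbd : ∀ p₁ p₂ : ℕ, p₁ + p₂ ≤ β → ∀ x ∈ Icc (x₀ - a) (x₀ + a),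
      ∀ z ∈ Icc (y₀ - b) (y₀ + b), |Dp f p₁ p₂ x z| ≤ 1)
    (hlip : ∀ p₁ p₂ : ℕ, p₁ + p₂ = β → ∀ x ∈ Icc (x₀ - a) (x₀ + a),
      ∀ x' ∈ Icc (x₀ - a) (x₀ + a), ∀ z ∈ Icc (y₀ - b) (y₀ + b), ∀ z' ∈ Icc (y₀ - b) (y₀ + b),
      |Dp f p₁ p₂ x z - Dp f p₁ p₂ x' z'| ≤ max |x - x'| |z - z'|)
    (hode : ∀ x ∈ Icc (x₀ - a) (x₀ + a), HasDerivAt y (f x (y x)) x)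
    (htraj : ∀ x ∈ Icc (x₀ - a) (x₀ + a), y x ∈ Icc (y₀ - b) (y₀ + b)) :
    ∀ x ∈ Icc (x₀ - min a b) (x₀ + min a b), ∀ x' ∈ Icc (x₀ - min a b) (x₀ + min a b),
      |iteratedDerivWithin (β + 1) y (Icc (x₀ - a) (x₀ + a)) x -
        iteratedDerivWithin (β + 1) y (Icc (x₀ - a) (x₀ + a)) x'| ≤
      2 ^ (β + 1) * (β + 1).factorial * |x - x'| := by
  intro x hx x' hx'
  have hsub : Icc (x₀ - min a b) (x₀ + min a b) ⊆ Icc (x₀ - a) (x₀ + a) :=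
    Icc_subset_Icc (by linarith [min_le_left a b]) (by linarith [min_le_left a b])
  replace hx := hsub hx
  replace hx' := hsub hx'
  have hf' : ContDiff ℝ β (uncurry f) := by exact_mod_cast hf
  have hB := hasDpBoundsOn_flowDeriv_iterate hf'
    (hasDpBoundsOn_of_abs_Dp_le_one (convex_Icc _ _) (convex_Icc _ _) hf' hbd hlip) le_rfl
  have hLip := (hB 0 0 (by simp)).2 x hx x' hx' (y x) (htraj x hx) (y x') (htraj x' hx')
  have hy : |y x - y x'| ≤ |x - x'| := by
    simpa using (convex_Icc _ _).norm_image_sub_le_of_norm_hasDerivWithin_le (C := 1)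
      (fun t ht => (hode t ht).hasDerivWithinAt)
      (fun t ht => by simpa [Dp] using hbd 0 0 (Nat.zero_le β) t ht (y t) (htraj t ht)) hx' hx
  have hUD := uniqueDiffOn_Icc (show x₀ - a < x₀ + a by linarith)
  rw [iteratedDerivWithin_succ_eq_flowDeriv_iterate hUD hf' hode le_rfl hx,
    iteratedDerivWithin_succ_eq_flowDeriv_iterate hUD hf' hode le_rfl hx']
  simp only [Dp, iteratedDeriv_zero, max_eq_left hy] at hLip
  calc _ ≤ _ := hLip
    _ = _ := by push_cast [Nat.factorial_succ]; ring

theorem nonautonomous_top_derivative_lipschitz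
    (β : ℕ) (f : ℝ → ℝ → ℝ) (y : ℝ → ℝ) (x₀ y₀ a b : ℝ) (ha : 0 < a) (hb : 0 < b)
    (hf : ContDiff ℝ (β : ℕ∞) (Function.uncurry f))
    (hcont : ContinuousOn (Function.uncurry f) (Icc (x₀ - a) (x₀ + a) ×ˢ Icc (y₀ - b) (y₀ + b)))
    (hbd : ∀ p₁ p₂ : ℕ, p₁ + p₂ ≤ β → ∀ x ∈ Icc (x₀ - a) (x₀ + a),
      ∀ z ∈ Icc (y₀ - b) (y₀ + b), |Dp f p₁ p₂ x z| ≤ 1)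
    (hlip : ∀ p₁ p₂ : ℕ, p₁ + p₂ = β → ∀ x ∈ Icc (x₀ - a) (x₀ + a),
      ∀ x' ∈ Icc (x₀ - a) (x₀ + a), ∀ z ∈ Icc (y₀ - b) (y₀ + b), ∀ z' ∈ Icc (y₀ - b) (y₀ + b),
      |Dp f p₁ p₂ x z - Dp f p₁ p₂ x' z'| ≤ max |x - x'| |z - z'|)
    (hy0 : y x₀ = y₀)
    (hode : ∀ x ∈ Icc (x₀ - a) (x₀ + a), HasDerivAt y (f x (y x)) x)
    (htraj : ∀ x ∈ Icc (x₀ - a) (x₀ + a), y x ∈ Icc (y₀ - b) (y₀ + b)) :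
    ∀ x ∈ Icc (x₀ - min a b) (x₀ + min a b), ∀ x' ∈ Icc (x₀ - min a b) (x₀ + min a b),
      |iteratedDerivWithin (β + 1) y (Icc (x₀ - a) (x₀ + a)) x -
        iteratedDerivWithin (β + 1) y (Icc (x₀ - a) (x₀ + a)) x'| ≤
      2 ^ (β + 1) * (β + 1).factorial * |x - x'| :=
  nonautonomous_top_derivative_lipschitz_general β f y x₀ y₀ a b ha hf hbd hlip hode htraj
end

section
/- Let y solve y'(x) = f(y(x)). Then for every 1 ≤ k ≤ β+1 (where f is β-times differentiable), the k-th derivative of y admits the representation y^(k)(x) = Σ_{i=1}^{(k-1)!} f^(a₁ⁱ)(y(x)) · f^(a₂ⁱ)(y(x)) · ⋯ · f^(a_kⁱ)(y(x)), where for each i the non-negative integer exponents satisfy a₁ⁱ + ⋯ + a_kⁱ = k - 1. In particular, y^(k) is a sum of exactly (k-1)! products, each product having k factors that are derivatives of f of total order k-1 evaluated at y(x). -/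
/-!
Put `g n x = f^(n) (y x)`. The chain rule and `y' = f ∘ y = g 0` give `(g n)' = g (n + 1) * g 0`.
So the product rule turns a product `g a₁ ⋯ g aₖ` into `k` products of `k + 1` factors: in the
`j`-th one, `aⱼ` is raised by one and a factor `g 0` is appended, so the total order rises by
one. Starting from `y' = g 0`, induction gives `k * (k - 1)! = k!` products for `y^(k+1)`.
-/

open Finset Nat

def differentiateFactor {n : ℕ} (a : Fin n → ℕ) (j : Fin n) : Fin (n + 1) → ℕ :=
  Fin.snoc (Function.update a j (a j + 1)) 0

theorem sum_differentiateFactor {n : ℕ} (a : Fin n → ℕ) (j : Fin n) :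
    ∑ i, differentiateFactor a j i = ∑ i, a i + 1 := by
  rw [differentiateFactor, Fin.sum_univ_castSucc]
  simp only [Fin.snoc_castSucc, Fin.snoc_last, add_zero]
  rw [Finset.sum_update_of_mem (mem_univ j), ← Finset.add_sum_erase _ _ (mem_univ j),
    sdiff_singleton_eq_erase]
  ring

theorem prod_differentiateFactor {M : Type*} [CommMonoid M] {n : ℕ} (g : ℕ → M)
    (a : Fin n → ℕ) (j : Fin n) :
    ∏ i, g (differentiateFactor a j i) = (∏ i ∈ univ.erase j, g (a i)) * (g (a j + 1) * g 0) := by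
  rw [differentiateFactor, Fin.prod_univ_castSucc]
  simp only [Fin.snoc_castSucc, Fin.snoc_last]
  rw [← Function.comp_def g, Function.comp_update, Finset.prod_update_of_mem (mem_univ j),
    sdiff_singleton_eq_erase]
  simp only [Function.comp_apply]
  ac_rfl

section

variable {g : ℕ → ℝ → ℝ} {N : ℕ}

theorem hasDerivAt_prod_of_hasDerivAt_succ_mul
    (hg : ∀ n < N, ∀ x, HasDerivAt (g n) (g (n + 1) x * g 0 x) x)
    {m : ℕ} (a : Fin m → ℕ) (ha : ∀ j, a j < N) (x : ℝ) :
    HasDerivAt (fun x => ∏ j, g (a j) x)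
      (∑ j, ∏ i, g (differentiateFactor a j i) x) x := by
  refine (HasDerivAt.fun_finsetProd (u := univ) fun j _ => hg (a j) (ha j) x).congr_deriv ?_
  refine sum_congr rfl fun j _ => ?_
  rw [prod_differentiateFactor (fun n => g n x), smul_eq_mul]

theorem exists_iteratedDeriv_succ_eq_sum_prod
    (hg : ∀ n < N, ∀ x, HasDerivAt (g n) (g (n + 1) x * g 0 x) x)
    {y : ℝ → ℝ} (hy : ∀ x, HasDerivAt y (g 0 x) x) :
    ∀ m ≤ N, ∃ a : Fin m ! → Fin (m + 1) → ℕ, (∀ i, ∑ j, a i j = m) ∧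
      ∀ x, iteratedDeriv (m + 1) y x = ∑ i, ∏ j, g (a i j) x := by
  intro m hm
  induction m with
  | zero =>
    refine ⟨fun _ _ => 0, fun _ => by simp, fun x => ?_⟩
    show iteratedDeriv 1 y x = ∑ _i : Fin 1, ∏ _j : Fin 1, g 0 x
    simp [(hy x).deriv]
  | succ m ih =>
    obtain ⟨a, ha_sum, ha_eq⟩ := ih (by omega)
    have ha_lt : ∀ i j, a i j < N := fun i j =>
      (ha_sum i ▸ single_le_sum (fun _ _ => Nat.zero_le _) (mem_univ j)).trans_lt hm
    let e : Fin (m + 1)! ≃ Fin m ! × Fin (m + 1) :=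
      (finCongr (factorial_succ m)).trans (finProdFinEquiv.symm.trans (Equiv.prodComm _ _))
    refine ⟨fun p => differentiateFactor (a (e p).1) (e p).2, fun p => ?_, fun x => ?_⟩
    · rw [sum_differentiateFactor, ha_sum]
    · have hderiv := HasDerivAt.fun_sum (u := univ) fun i _ =>
        hasDerivAt_prod_of_hasDerivAt_succ_mul hg (a i) (ha_lt i) x
      rw [iteratedDeriv_succ, funext ha_eq, hderiv.deriv, ← Fintype.sum_prod_type']
      exact (e.sum_comp (fun q => ∏ j, g (differentiateFactor (a q.1) q.2 j) x)).symm

end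

/-- Representation of the derivatives of a solution of the autonomous ODE `y' = f (y)`:
`y^(k)` is a sum of exactly `(k-1)!` products of `k` derivatives of `f` (composed with `y`)
whose orders sum to `k - 1`. -/
theorem autonomous_derivative_representation
    (β : ℕ) (f y : ℝ → ℝ) (hf : ContDiff ℝ (β : ℕ∞) f)
    (hode : ∀ x : ℝ, HasDerivAt y (f (y x)) x) :
    ∀ k, 1 ≤ k → k ≤ β + 1 →
      ∃ a : Fin (k - 1).factorial → Fin k → ℕ,
        (∀ i, (∑ j, a i j) = k - 1) ∧
        ∀ x : ℝ, iteratedDeriv k y x = ∑ i, ∏ j, iteratedDeriv (a i j) f (y x) := by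
  intro k hk1 hk2
  obtain ⟨m, rfl⟩ : ∃ m, k = m + 1 := ⟨k - 1, by omega⟩
  have hg : ∀ n < β, ∀ x, HasDerivAt (fun x => iteratedDeriv n f (y x))
      (iteratedDeriv (n + 1) f (y x) * iteratedDeriv 0 f (y x)) x := by
    intro n hn x
    have hdiff := hf.differentiable_iteratedDeriv n (by exact_mod_cast hn)
    rw [iteratedDeriv_succ, iteratedDeriv_zero]
    exact (hdiff (y x)).hasDerivAt.comp x (hode x)
  simpa using exists_iteratedDeriv_succ_eq_sum_prod hg (by simpa using hode) m (by omega)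
end

section
/- (Taylor-remainder chaining step) Let h, g be (γ+1)-times differentiable on (0,α) with |h^(γ+1)(u) - h^(γ+1)(v)| ≤ (γ+1)!·2^{γ+1}|u-v| (and similarly for g), and suppose |h^(k)(x) - g^(k)(x)| ≤ δ_k for k = 0,…,γ+1 at a point x, where δ_k = (δ/5)^{1 - k/(γ+2)}. Then for any Δ with |Δ| ≤ (1/2)(δ/5)^{1/(γ+2)} and x+Δ ∈ (0,α), we have |h(x+Δ) - g(x+Δ)| ≤ δ. -/
open Set

open scoped Nat

/-!
Apply Taylor's formula of order `γ + 1` to `h` and to `g` separately. By the Lagrange form, the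
remainder of each is `(f^(γ+1)(ξ) - f^(γ+1)(x)) Δ^(γ+1) / (γ+1)!`, which the Lipschitz bound on
the top derivative makes at most `(2|Δ|)^(γ+2) ≤ δ/5`. The two Taylor polynomials differ by
`∑ Δ^k/k! (h^(k)(x) - g^(k)(x))`, and since `|Δ| ≤ t/2` with `t = (δ/5)^(1/(γ+2))` and
`δ_k = (δ/5)/t^k`, its `k`-th term is at most `(δ/5)/2^k`; the geometric series gives `2δ/5`.
-/

theorem exists_taylor_lagrange_of_isOpen {f : ℝ → ℝ} {U : Set ℝ} {n : ℕ} {x Δ : ℝ}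
    (hU : IsOpen U) (hf : ContDiffOn ℝ ((n : ℕ∞) + 1) f U) (hseg : uIcc x (x + Δ) ⊆ U) :
    ∃ ξ ∈ uIcc x (x + Δ), f (x + Δ) =
      ∑ k ∈ Finset.range (n + 1), iteratedDerivWithin k f U x * Δ ^ k / k ! +
        iteratedDerivWithin (n + 1) f U ξ * Δ ^ (n + 1) / (n + 1)! := by
  rcases eq_or_ne Δ 0 with rfl | hΔ
  · refine ⟨x, left_mem_uIcc, ?_⟩
    simp [Finset.sum_range_succ']
  have hne : x ≠ x + Δ := by simpa using hΔ
  have hderiv : ∀ k, ∀ z ∈ uIcc x (x + Δ), iteratedDerivWithin k f U z = iteratedDeriv k f z :=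
    fun k z hz => iteratedDerivWithin_of_isOpen hU (hseg hz)
  have hpoly : taylorWithinEval f n (uIcc x (x + Δ)) x (x + Δ) =
      ∑ k ∈ Finset.range (n + 1), iteratedDerivWithin k f U x * Δ ^ k / k ! := by
    rw [taylor_within_apply]
    refine Finset.sum_congr rfl fun k hk => ?_
    have hk : (k : WithTop ℕ∞) ≤ (n : ℕ∞) + 1 := by
      exact_mod_cast (Finset.mem_range.1 hk).le
    rw [iteratedDerivWithin_eq_iteratedDeriv (uniqueDiffOn_uIcc hne)
        ((hf.contDiffAt (hU.mem_nhds (hseg left_mem_uIcc))).of_le hk) left_mem_uIcc,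
      hderiv k x left_mem_uIcc, smul_eq_mul, add_sub_cancel_left]
    ring
  obtain ⟨ξ, hξ, hrem⟩ := taylor_mean_remainder_lagrange_iteratedDeriv hne (hf.mono hseg)
  refine ⟨ξ, uIoo_subset_uIcc_self hξ, ?_⟩
  rw [add_sub_cancel_left, hpoly] at hrem
  rw [hderiv _ ξ (uIoo_subset_uIcc_self hξ), ← hrem]
  ring

theorem abs_sub_taylor_le_of_lipschitz_iteratedDerivWithin {f : ℝ → ℝ} {U : Set ℝ} {n : ℕ}
    {x Δ K : ℝ} (hU : IsOpen U) (hf : ContDiffOn ℝ ((n : ℕ∞) + 1) f U)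
    (hseg : uIcc x (x + Δ) ⊆ U) (hK : 0 ≤ K)
    (hlip : ∀ u ∈ uIcc x (x + Δ), |iteratedDerivWithin (n + 1) f U u -
      iteratedDerivWithin (n + 1) f U x| ≤ K * |u - x|) :
    |f (x + Δ) - ∑ k ∈ Finset.range (n + 2), iteratedDerivWithin k f U x * Δ ^ k / k !| ≤
      K * |Δ| ^ (n + 2) / (n + 1)! := by
  obtain ⟨ξ, hξ, hlagrange⟩ := exists_taylor_lagrange_of_isOpen hU hf hseg
  have hrem : f (x + Δ) - ∑ k ∈ Finset.range (n + 2), iteratedDerivWithin k f U x * Δ ^ k / k ! =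
      (iteratedDerivWithin (n + 1) f U ξ - iteratedDerivWithin (n + 1) f U x) *
        Δ ^ (n + 1) / (n + 1)! := by
    rw [Finset.sum_range_succ, hlagrange]
    ring
  have hξx : |ξ - x| ≤ |Δ| := by simpa using abs_sub_left_of_mem_uIcc hξ
  rw [hrem, abs_div, abs_mul, abs_pow, Nat.abs_cast]
  refine div_le_div_of_nonneg_right ?_ (by positivity)
  calc |iteratedDerivWithin (n + 1) f U ξ - iteratedDerivWithin (n + 1) f U x| * |Δ| ^ (n + 1)
      ≤ K * |Δ| * |Δ| ^ (n + 1) := by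
        gcongr
        exact (hlip ξ hξ).trans (mul_le_mul_of_nonneg_left hξx hK)
    _ = K * |Δ| ^ (n + 2) := by ring

theorem two_pow_succ_mul_abs_pow_le {n : ℕ} {Δ t : ℝ} (hΔ : |Δ| ≤ t / 2) :
    2 ^ (n + 1) * |Δ| ^ (n + 2) ≤ t ^ (n + 2) :=
  calc 2 ^ (n + 1) * |Δ| ^ (n + 2) ≤ 2 ^ (n + 2) * |Δ| ^ (n + 2) := by
        gcongr <;> [norm_num; omega]
    _ = (2 * |Δ|) ^ (n + 2) := (mul_pow _ _ _).symm
    _ ≤ t ^ (n + 2) := by gcongr; linarith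

theorem abs_sum_sub_sum_mul_pow_div_factorial_le {N : ℕ} {a b : ℕ → ℝ} {A t Δ : ℝ} (hA : 0 ≤ A)
    (hΔ : |Δ| ≤ t / 2) (hab : ∀ k < N, |a k - b k| * t ^ k ≤ A) :
    |(∑ k ∈ Finset.range N, a k * Δ ^ k / k !) - ∑ k ∈ Finset.range N, b k * Δ ^ k / k !| ≤
      2 * A := by
  have hterm : ∀ k < N, |(a k * Δ ^ k / k !) - b k * Δ ^ k / k !| ≤ A * (1 / 2) ^ k := by
    intro k hk
    have hfact : (1 : ℝ) ≤ k ! := by exact_mod_cast k.factorial_pos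
    rw [← sub_div, ← sub_mul, abs_div, abs_mul, abs_pow, Nat.abs_cast]
    calc |a k - b k| * |Δ| ^ k / k ! ≤ |a k - b k| * (t / 2) ^ k := by
          refine (div_le_self (by positivity) hfact).trans ?_
          gcongr
      _ = |a k - b k| * t ^ k * (1 / 2) ^ k := by ring
      _ ≤ A * (1 / 2) ^ k := by gcongr; exact hab k hk
  rw [← Finset.sum_sub_distrib]
  calc _ ≤ ∑ k ∈ Finset.range N, |(a k * Δ ^ k / k !) - b k * Δ ^ k / k !| :=
        Finset.abs_sum_le_sum_abs _ _
    _ ≤ ∑ k ∈ Finset.range N, A * (1 / 2) ^ k :=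
        Finset.sum_le_sum fun k hk => hterm k (Finset.mem_range.1 hk)
    _ = A * ∑ k ∈ Finset.range N, (1 / 2 : ℝ) ^ k := (Finset.mul_sum _ _ _).symm
    _ ≤ A * 2 := by gcongr; exact sum_geometric_two_le N
    _ = 2 * A := mul_comm _ _

theorem rpow_one_div_pow_mul_rpow_one_sub_div {A m : ℝ} (hA : 0 < A) (hm : m ≠ 0) (k : ℕ) :
    (A ^ (1 / m)) ^ k * A ^ (1 - k / m) = A := by
  rw [← Real.rpow_natCast, ← Real.rpow_mul hA.le, ← Real.rpow_add hA]
  convert Real.rpow_one A using 2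
  field_simp
  ring

theorem taylor_chaining_step_general
    (γ : ℕ) (α δ x Δ : ℝ) (h g : ℝ → ℝ)
    (hδ : 0 < δ)
    (hh : ContDiffOn ℝ ((γ : ℕ∞) + 1) h (Ioo 0 α))
    (hg : ContDiffOn ℝ ((γ : ℕ∞) + 1) g (Ioo 0 α))
    (hhlip : ∀ u ∈ Ioo 0 α, ∀ v ∈ Ioo 0 α,
      |iteratedDerivWithin (γ + 1) h (Ioo 0 α) u -
        iteratedDerivWithin (γ + 1) h (Ioo 0 α) v| ≤
      (γ + 1).factorial * 2 ^ (γ + 1) * |u - v|)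
    (hglip : ∀ u ∈ Ioo 0 α, ∀ v ∈ Ioo 0 α,
      |iteratedDerivWithin (γ + 1) g (Ioo 0 α) u -
        iteratedDerivWithin (γ + 1) g (Ioo 0 α) v| ≤
      (γ + 1).factorial * 2 ^ (γ + 1) * |u - v|)
    (hx : x ∈ Ioo 0 α)
    (hclose : ∀ k ≤ γ + 1,
      |iteratedDerivWithin k h (Ioo 0 α) x - iteratedDerivWithin k g (Ioo 0 α) x| ≤
        (δ / 5) ^ (1 - (k : ℝ) / ((γ : ℝ) + 2)))
    (hΔ : |Δ| ≤ (1 / 2) * (δ / 5) ^ ((1 : ℝ) / ((γ : ℝ) + 2)))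
    (hxΔ : x + Δ ∈ Ioo 0 α) :
    |h (x + Δ) - g (x + Δ)| ≤ δ := by
  have hγ : (γ : ℝ) + 2 ≠ 0 := by positivity
  have hscale := rpow_one_div_pow_mul_rpow_one_sub_div (by positivity : 0 < δ / 5) hγ
  have ht : 0 ≤ (δ / 5) ^ ((1 : ℝ) / ((γ : ℝ) + 2)) := by positivity
  generalize (δ / 5) ^ ((1 : ℝ) / ((γ : ℝ) + 2)) = t at ht hΔ hscale
  have hΔt : |Δ| ≤ t / 2 := by linarith
  have htop : t ^ (γ + 2) = δ / 5 := by
    simpa [div_self hγ] using hscale (γ + 2)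
  have hrem : (γ + 1)! * 2 ^ (γ + 1) * |Δ| ^ (γ + 2) / (γ + 1)! ≤ δ / 5 := by
    rw [mul_assoc, mul_div_cancel_left₀ _ (by positivity), ← htop]
    exact two_pow_succ_mul_abs_pow_le hΔt
  have hseg : uIcc x (x + Δ) ⊆ Ioo 0 α := ordConnected_Ioo.uIcc_subset hx hxΔ
  have hRh := abs_sub_taylor_le_of_lipschitz_iteratedDerivWithin isOpen_Ioo hh hseg
    (by positivity) fun u hu => hhlip u (hseg hu) x hx
  have hRg := abs_sub_taylor_le_of_lipschitz_iteratedDerivWithin isOpen_Ioo hg hseg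
    (by positivity) fun u hu => hglip u (hseg hu) x hx
  have hpoly := abs_sum_sub_sum_mul_pow_div_factorial_le (N := γ + 2) (A := δ / 5) (Δ := Δ)
    (a := fun k => iteratedDerivWithin k h (Ioo 0 α) x)
    (b := fun k => iteratedDerivWithin k g (Ioo 0 α) x) (by positivity) hΔt fun k hk => by
      rw [← hscale k, mul_comm]
      exact mul_le_mul_of_nonneg_left (hclose k (by omega)) (by positivity)
  rw [abs_sub_comm] at hRg
  calc |h (x + Δ) - g (x + Δ)| ≤ δ / 5 + (2 * (δ / 5) + δ / 5) :=
      (abs_sub_le _ _ _).trans <| add_le_add (hRh.trans hrem) <|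
        (abs_sub_le _ _ _).trans <| add_le_add hpoly (hRg.trans hrem)
    _ ≤ δ := by linarith

/-- Taylor-remainder chaining step: if two `(γ+1)`-times differentiable functions with
Lipschitz top derivatives are `δ_k = (δ/5)^{1-k/(γ+2)}`-close in all derivatives of order
`k ≤ γ+1` at `x`, then they are `δ`-close at any `x + Δ` with
`|Δ| ≤ (1/2)(δ/5)^{1/(γ+2)}`. -/
theorem taylor_chaining_step
    (γ : ℕ) (α δ x Δ : ℝ) (h g : ℝ → ℝ)
    (hα : 0 < α) (hδ : 0 < δ)
    (hh : ContDiffOn ℝ ((γ : ℕ∞) + 1) h (Ioo 0 α))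
    (hg : ContDiffOn ℝ ((γ : ℕ∞) + 1) g (Ioo 0 α))
    (hhlip : ∀ u ∈ Ioo 0 α, ∀ v ∈ Ioo 0 α,
      |iteratedDerivWithin (γ + 1) h (Ioo 0 α) u -
        iteratedDerivWithin (γ + 1) h (Ioo 0 α) v| ≤
      (γ + 1).factorial * 2 ^ (γ + 1) * |u - v|)
    (hglip : ∀ u ∈ Ioo 0 α, ∀ v ∈ Ioo 0 α,
      |iteratedDerivWithin (γ + 1) g (Ioo 0 α) u -
        iteratedDerivWithin (γ + 1) g (Ioo 0 α) v| ≤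
      (γ + 1).factorial * 2 ^ (γ + 1) * |u - v|)
    (hx : x ∈ Ioo 0 α)
    (hclose : ∀ k ≤ γ + 1,
      |iteratedDerivWithin k h (Ioo 0 α) x - iteratedDerivWithin k g (Ioo 0 α) x| ≤
        (δ / 5) ^ (1 - (k : ℝ) / ((γ : ℝ) + 2)))
    (hΔ : |Δ| ≤ (1 / 2) * (δ / 5) ^ ((1 : ℝ) / ((γ : ℝ) + 2)))
    (hxΔ : x + Δ ∈ Ioo 0 α) :
    |h (x + Δ) - g (x + Δ)| ≤ δ :=
  taylor_chaining_step_general γ α δ x Δ h g hδ hh hg hhlip hglip hx hclose hΔ hxΔ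
end
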